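/- arXiv:2403.12791 — 8 statements merged into one kernel-verified Lean document; each statement's English description precedes it below -/
import Mathlib

section
/- If u is a 1-balanced sequence over {a,b}, a = 1^ω is the constant sequence on letter 1, and b is a 1-balanced sequence over {2,3}, then the ternary sequence v = colour(u, a, b) is 2-balanced: for any two factors U, V of v of the same length and each letter c ∈ {1,2,3}, we have ||U|_c − |V|_c| ≤ 2. -/
/-- The factor of length `n` of the sequence `s` starting at position `i`. -/
def fac {A : Type*} (s : ℕ → A) (i n : ℕ) : List A :=
  (List.range n).map (fun j => s (i + j))

/-- A sequence is `C`-balanced if any two factors of the same length have numbers of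
occurrences of each letter differing by at most `C`. -/
def IsBalanced {A : Type*} [DecidableEq A] (C : ℕ) (s : ℕ → A) : Prop :=
  ∀ i j n : ℕ, ∀ c : A,
    |((fac s i n).count c : ℤ) - ((fac s j n).count c : ℤ)| ≤ C

/-- Number of positions `k < n` with `u k = true` (letter `b`). -/
def countB (u : ℕ → Bool) (n : ℕ) : ℕ :=
  ((Finset.range n).filter (fun k => u k = true)).card

/-- Number of positions `k < n` with `u k = false` (letter `a`). -/
def countA (u : ℕ → Bool) (n : ℕ) : ℕ :=
  ((Finset.range n).filter (fun k => u k = false)).card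

/-- Colouring of a binary sequence `u` (`false` = letter a, `true` = letter b)
by sequences `a` and `b`. -/
def colour {A : Type*} (u : ℕ → Bool) (a b : ℕ → A) (n : ℕ) : A :=
  if u n then b (countB u n) else a (countA u n)

/-!
A factor of `colour u a b` interleaves a factor of `a` with a factor of `b`, whose lengths are
the numbers of letters `a` and `b` in the corresponding factor of `u`. With `a = 1^ω`, the number
of `1`s in a factor of `v` is the number of letters `a` in the factor of `u`, so it inherits the
1-balance of `u`. For `c ∈ {2, 3}` it is the number of `c`s in a factor of `b` whose length is
the number of letters `b` in the factor of `u`; two such lengths differ by at most 1, and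
lengthening a factor by one letter changes a count by at most 1, so 1-balance of `b` gives 2.
-/

variable {A : Type*}

lemma length_fac (s : ℕ → A) (i n : ℕ) : (fac s i n).length = n := by
  simp [fac]

lemma fac_add (s : ℕ → A) (i m k : ℕ) :
    fac s i (m + k) = fac s i m ++ fac s (i + m) k := by
  simp [fac, List.range_add, Function.comp_def, add_assoc]

lemma fac_succ (s : ℕ → A) (i n : ℕ) : fac s i (n + 1) = fac s i n ++ [s (i + n)] := by
  rw [fac_add]
  simp [fac]

section Count

variable [DecidableEq A]

lemma count_fac_eq_zero {s : ℕ → A} {c : A} (hs : ∀ k, s k ≠ c) (i n : ℕ) :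
    (fac s i n).count c = 0 := by
  simp [fac, List.count_eq_zero, hs]

lemma count_fac_const (c : A) (i n : ℕ) : (fac (fun _ => c) i n).count c = n := by
  simp [fac]

lemma card_filter_range_add (s : ℕ → A) (x : A) (i n : ℕ) :
    ((Finset.range (i + n)).filter (fun k => s k = x)).card
      = ((Finset.range i).filter (fun k => s k = x)).card + (fac s i n).count x := by
  induction n with
  | zero => simp [fac]
  | succ n ih =>
    rw [← add_assoc, Finset.range_add_one, Finset.filter_insert, fac_succ, List.count_append,
      List.count_singleton, ← add_assoc, ← ih]
    by_cases h : s (i + n) = x <;> simp [h, Finset.card_insert_of_notMem]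

lemma abs_count_fac_sub_le (s : ℕ → A) (c : A) (i m m' : ℕ) :
    |((fac s i m).count c : ℤ) - (fac s i m').count c| ≤ |(m : ℤ) - m'| := by
  wlog hm : m ≤ m' generalizing m m'
  · rw [abs_sub_comm, abs_sub_comm (m : ℤ)]
    exact this m' m (by omega)
  obtain ⟨k, rfl⟩ := Nat.exists_eq_add_of_le hm
  have hk : (fac s (i + m) k).count c ≤ k :=
    (List.count_le_length).trans_eq (length_fac s _ k)
  rw [fac_add, List.count_append, Nat.cast_add, Nat.cast_add, sub_add_cancel_left,
    sub_add_cancel_left, abs_neg, abs_neg, Nat.abs_cast, Nat.abs_cast]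
  exact_mod_cast hk

lemma IsBalanced.abs_count_fac_sub_le_add {C : ℕ} {s : ℕ → A} (hs : IsBalanced C s)
    (c : A) (i j m m' : ℕ) :
    |((fac s i m).count c : ℤ) - (fac s j m').count c| ≤ C + |(m : ℤ) - m'| :=
  calc _ ≤ |((fac s i m).count c : ℤ) - (fac s j m).count c|
          + |((fac s j m).count c : ℤ) - (fac s j m').count c| := abs_sub_le _ _ _
    _ ≤ C + |(m : ℤ) - m'| := add_le_add (hs i j m c) (abs_count_fac_sub_le s c j m m')

lemma count_fac_colour (u : ℕ → Bool) (a b : ℕ → A) (c : A) (i n : ℕ) :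
    (fac (colour u a b) i n).count c
      = (fac a (countA u i) ((fac u i n).count false)).count c
        + (fac b (countB u i) ((fac u i n).count true)).count c := by
  induction n with
  | zero => simp [fac]
  | succ n ih =>
    have hA : countA u (i + n) = countA u i + (fac u i n).count false :=
      card_filter_range_add u false i n
    have hB : countB u (i + n) = countB u i + (fac u i n).count true :=
      card_filter_range_add u true i n
    cases h : u (i + n) <;>
      simp [fac_succ, List.count_append, ih, colour, h, hA, hB] <;> omega

end Count

theorem stmt_1 (u : ℕ → Bool) (b : ℕ → ℕ)
    (hu : IsBalanced 1 u)
    (hbrange : ∀ n, b n = 2 ∨ b n = 3)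
    (hb : IsBalanced 1 b) :
    IsBalanced 2 (colour u (fun _ => 1) b) := by
  intro i j n c
  rw [count_fac_colour, count_fac_colour]
  by_cases hc : c = 1
  · have hb1 : ∀ k, b k ≠ 1 := fun k => by rcases hbrange k with h | h <;> omega
    subst hc
    simp only [count_fac_const, count_fac_eq_zero hb1, add_zero]
    exact (hu i j n false).trans (by norm_num)
  · have h1c : ∀ _ : ℕ, (1 : ℕ) ≠ c := fun _ => Ne.symm hc
    simp only [count_fac_eq_zero h1c, zero_add]
    have hlen := hu i j n true
    have hbal := hb.abs_count_fac_sub_le_add c (countB u i) (countB u j)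
      ((fac u i n).count true) ((fac u j n).count true)
    push_cast at hlen hbal ⊢
    linarith
end

section
/- Let α ∈ (0,1) be irrational and let u be a Sturmian sequence with slope α. For every n ≥ 1, the number P_α(n) of factors of u of length n whose Parikh vector is (⌊(1−α)n⌋, ⌈nα⌉) satisfies P_α(n) = #{k ∈ {1,…,n} : {kα} ≤ {nα}}, where {x} denotes the fractional part. -/
open scoped Classical

/-- Sturmian sequence with slope `α` and intercept `ρ`:
`true` codes letter b (interval `[1-α,1)`), `false` codes letter a. -/
noncomputable def sturmian (α ρ : ℝ) (n : ℕ) : Bool :=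
  if 1 - α ≤ Int.fract (ρ + n * α) then true else false

noncomputable def wd (α x : ℝ) (n : ℕ) : List Bool :=
  (List.range n).map (fun j : ℕ => if 1 - α ≤ Int.fract (x + j * α) then true else false)

lemma floor_add_left (x t : ℝ) (hx : x ∈ Set.Ico (0:ℝ) 1) :
    ⌊x + t⌋ = ⌊t⌋ + (if 1 - Int.fract t ≤ x then 1 else 0) := by
  have h1 : x + t = (x + Int.fract t) + (⌊t⌋ : ℤ) := by rw [Int.fract]; ring
  rw [h1, Int.floor_add_intCast]
  have hf := Int.fract_nonneg t
  have hf1 := Int.fract_lt_one t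
  split_ifs with h
  · rw [show ⌊x + Int.fract t⌋ = 1 from Int.floor_eq_iff.mpr (by constructor <;> push_cast <;>
      [linarith [hx.1]; linarith [hx.2]]), add_comm]
  · push_neg at h
    rw [show ⌊x + Int.fract t⌋ = 0 from Int.floor_eq_iff.mpr (by constructor <;> push_cast <;>
      [linarith [hx.1]; linarith [hx.2]]), add_comm]

lemma floor_add_alpha (α t : ℝ) (hα : α ∈ Set.Ioo (0:ℝ) 1) :
    ⌊t + α⌋ = ⌊t⌋ + (if 1 - α ≤ Int.fract t then 1 else 0) := by
  have h1 : t + α = (Int.fract t + α) + (⌊t⌋ : ℤ) := by rw [Int.fract]; ring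
  rw [h1, Int.floor_add_intCast]
  have hf := Int.fract_nonneg t
  have hf1 := Int.fract_lt_one t
  split_ifs with h
  · rw [show ⌊Int.fract t + α⌋ = 1 from Int.floor_eq_iff.mpr (by constructor <;> push_cast <;>
      [linarith [hα.1]; linarith [hα.2]]), add_comm]
  · push_neg at h
    rw [show ⌊Int.fract t + α⌋ = 0 from Int.floor_eq_iff.mpr (by constructor <;> push_cast <;>
      [linarith [hα.1]; linarith [hα.2]]), add_comm]

lemma wd_count (α x : ℝ) (hα : α ∈ Set.Ioo (0:ℝ) 1) (hx : x ∈ Set.Ico (0:ℝ) 1) (n : ℕ) :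
    ((wd α x n).count true : ℤ) = ⌊x + n * α⌋ := by
  induction n with
  | zero => simp [wd]; exact (Int.floor_eq_zero_iff.mpr hx).symm
  | succ n ih =>
      have hw : wd α x (n+1) = wd α x n ++ [if 1 - α ≤ Int.fract (x + n * α) then true else false] := by
        simp [wd, List.range_succ]
      rw [hw, List.count_append]
      have hfl : (⌊x + (↑(n+1) : ℝ) * α⌋ : ℤ) = ⌊(x + n * α) + α⌋ := by push_cast; ring_nf
      rw [hfl, floor_add_alpha α (x + n*α) hα]
      push_cast
      rw [← ih]
      split_ifs with h <;> simp

lemma wd_take (α x : ℝ) (n k : ℕ) (h : k ≤ n) : (wd α x n).take k = wd α x k := by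
  unfold wd
  rw [← List.map_take, List.take_range, Nat.min_eq_left h]

lemma wd_eq_iff (α x y : ℝ) (hα : α ∈ Set.Ioo (0:ℝ) 1) (hx : x ∈ Set.Ico (0:ℝ) 1)
    (hy : y ∈ Set.Ico (0:ℝ) 1) (n : ℕ) :
    wd α x n = wd α y n ↔
      ∀ k : ℕ, 1 ≤ k → k ≤ n →
        ((1 - Int.fract (k * α) ≤ x) ↔ (1 - Int.fract (k * α) ≤ y)) := by
  constructor
  · intro h k hk1 hkn
    have hc : (((wd α x n).take k).count true : ℤ) = (((wd α y n).take k).count true : ℤ) := by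
      rw [h]
    rw [wd_take α x n k hkn, wd_take α y n k hkn, wd_count α x hα hx, wd_count α y hα hy] at hc
    rw [floor_add_left x _ hx, floor_add_left y _ hy] at hc
    split_ifs at hc with h1 h2 h2 <;> first | tauto | omega
  · intro h
    have hfl : ∀ k : ℕ, k ≤ n → ⌊x + k * α⌋ = ⌊y + k * α⌋ := by
      intro k hk
      rcases Nat.eq_zero_or_pos k with rfl | hk1
      · push_cast
        simp only [zero_mul, add_zero]
        rw [Int.floor_eq_zero_iff.mpr hx, Int.floor_eq_zero_iff.mpr hy]
      · rw [floor_add_left x _ hx, floor_add_left y _ hy]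
        have := h k hk1 hk
        split_ifs with h1 h2 h2 <;> first | rfl | tauto
    unfold wd
    apply List.map_congr_left
    intro j hj
    rw [List.mem_range] at hj
    have e1 := floor_add_alpha α (x + j*α) hα
    have e2 := floor_add_alpha α (y + j*α) hα
    have hj1 : ⌊x + (j:ℝ)*α + α⌋ = ⌊x + ((j+1:ℕ):ℝ)*α⌋ := by push_cast; ring_nf
    have hj2 : ⌊y + (j:ℝ)*α + α⌋ = ⌊y + ((j+1:ℕ):ℝ)*α⌋ := by push_cast; ring_nf
    have hA : ⌊x + (j:ℝ)*α⌋ = ⌊y + (j:ℝ)*α⌋ := hfl j (le_of_lt hj)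
    have hB : ⌊x + (j:ℝ)*α + α⌋ = ⌊y + (j:ℝ)*α + α⌋ := by
      rw [hj1, hj2]; exact hfl (j+1) hj
    rw [e1, e2, hA] at hB
    split_ifs at hB ⊢ with h1 h2 <;> first | rfl | omega

lemma dense_sub (α : ℝ) (hirr : Irrational α) :
    Dense ((AddSubgroup.closure {1, α} : AddSubgroup ℝ) : Set ℝ) := by
  rcases AddSubgroup.dense_or_cyclic (AddSubgroup.closure {1, α}) with h | ⟨a, ha⟩
  · exact h
  · exfalso
    have h1 : (1:ℝ) ∈ AddSubgroup.closure {1, α} :=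
      AddSubgroup.subset_closure (by simp)
    have h2 : α ∈ AddSubgroup.closure {1, α} :=
      AddSubgroup.subset_closure (by simp)
    rw [ha, AddSubgroup.mem_closure_singleton] at h1 h2
    obtain ⟨p, hp⟩ := h1
    obtain ⟨q, hq⟩ := h2
    rw [zsmul_eq_mul] at hp hq
    have hp0 : p ≠ 0 := by rintro rfl; simp at hp
    refine hirr ⟨(q : ℚ) / p, ?_⟩
    have ha0 : a = 1 / p := by field_simp at hp ⊢; linarith
    rw [ha0] at hq
    push_cast
    rw [← hq]
    field_simp

lemma exists_small_step (α : ℝ) (hirr : Irrational α) (ε : ℝ) (hε : 0 < ε) (hε1 : ε ≤ 1) :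
    ∃ d : ℕ, 0 < d ∧ (Int.fract (d * α) < ε ∨ 1 - ε < Int.fract (d * α)) := by
  obtain ⟨g, hgS, hg⟩ := (dense_sub α hirr).exists_mem_open isOpen_Ioo
    (Set.nonempty_Ioo.mpr hε : (Set.Ioo (0:ℝ) ε).Nonempty)
  rw [SetLike.mem_coe, AddSubgroup.mem_closure_pair] at hgS
  obtain ⟨q, p, hpq⟩ := hgS
  rw [zsmul_eq_mul, zsmul_eq_mul, mul_one] at hpq
  -- g = q + p * α
  have hp0 : p ≠ 0 := by
    rintro rfl
    simp only [Int.cast_zero, zero_mul, add_zero] at hpq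
    have : (0:ℝ) < q := hpq ▸ hg.1
    have : (1:ℝ) ≤ q := by exact_mod_cast this
    have := hg.2
    linarith
  have hfg : Int.fract g = g := Int.fract_eq_self.mpr ⟨hg.1.le, lt_of_lt_of_le hg.2 hε1⟩
  rcases hp0.lt_or_gt with hneg | hpos
  · refine ⟨(-p).toNat, by omega, Or.inr ?_⟩
    have hcast : ((-p).toNat : ℝ) = -(p:ℝ) := by
      have : ((-p).toNat : ℤ) = -p := Int.toNat_of_nonneg (by omega)
      exact_mod_cast congrArg (fun z : ℤ => (z : ℝ)) this
    have : Int.fract ((-p).toNat * α) = Int.fract (-g) := by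
      rw [hcast]
      have : -(p:ℝ) * α = -g + q := by rw [← hpq]; ring
      rw [this, Int.fract_add_intCast]
    rw [this, Int.fract_neg (by rw [hfg]; exact ne_of_gt hg.1)]
    rw [hfg]; linarith [hg.2]
  · refine ⟨p.toNat, by omega, Or.inl ?_⟩
    have hcast : (p.toNat : ℝ) = (p:ℝ) := by
      have : (p.toNat : ℤ) = p := Int.toNat_of_nonneg (by omega)
      exact_mod_cast congrArg (fun z : ℤ => (z : ℝ)) this
    have : Int.fract (p.toNat * α) = Int.fract g := by
      rw [hcast]
      have : (p:ℝ) * α = g + -q := by rw [← hpq]; push_cast; ring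
      rw [this, ← Int.cast_neg, Int.fract_add_intCast]
    rw [this, hfg]; exact hg.2

lemma fract_ne_zero_of_irrational (t : ℝ) (ht : Irrational t) : Int.fract t ≠ 0 := by
  intro h
  apply ht.ne_int ⌊t⌋
  unfold Int.fract at h
  linarith

lemma orbit_hits (α ρ u v : ℝ) (hirr : Irrational α) (hu : 0 ≤ u) (huv : u < v) (hv : v ≤ 1) :
    ∃ i : ℕ, Int.fract (ρ + i * α) ∈ Set.Ioo u v := by
  set ε := (v - u) / 2 with hεdef
  have hε : 0 < ε := by rw [hεdef]; linarith
  have hε1 : ε ≤ 1 := by rw [hεdef]; linarith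
  set c := (u + v) / 2 with hcdef
  have hcu : c - ε = u := by rw [hcdef, hεdef]; ring
  have hcv : c + ε = v := by rw [hcdef, hεdef]; ring
  obtain ⟨d, hd0, hcase⟩ := exists_small_step α hirr ε hε hε1
  have hdirr : Irrational ((d:ℝ) * α) := hirr.natCast_mul (by omega)
  rcases hcase with hsmall | hbig
  · -- step δ forward
    set δ := Int.fract ((d:ℝ) * α) with hδdef
    have hδ0 : 0 < δ :=
      lt_of_le_of_ne (Int.fract_nonneg _) (Ne.symm (fract_ne_zero_of_irrational _ hdirr))
    set K : ℤ := ⌈ρ⌉ with hKdef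
    have hr : (0:ℝ) ≤ (K:ℝ) + c - ρ := by
      have h1 : ρ ≤ (K:ℝ) := Int.le_ceil ρ
      have : 0 < c := by linarith
      linarith
    set r := (K:ℝ) + c - ρ with hrdef
    set m := (⌈r / δ⌉).toNat with hmdef
    have h2 : ((⌈r / δ⌉).toNat : ℤ) = ⌈r / δ⌉ :=
      Int.toNat_of_nonneg (Int.ceil_nonneg (div_nonneg hr hδ0.le))
    have hmcast : (m:ℝ) = ((⌈r / δ⌉ : ℤ) : ℝ) := by
      rw [hmdef]; exact_mod_cast congrArg (fun z : ℤ => (z:ℝ)) h2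
    have hmge : r / δ ≤ (m:ℝ) := by rw [hmcast]; exact Int.le_ceil _
    have hmlt : (m:ℝ) < r / δ + 1 := by rw [hmcast]; exact Int.ceil_lt_add_one _
    have hrδ : r = (r / δ) * δ := by field_simp
    have hmδ1 : r ≤ m * δ := by nlinarith
    have hmδ2 : (m:ℝ) * δ < r + δ := by nlinarith
    refine ⟨m * d, ?_⟩
    have hfr : Int.fract (ρ + (↑(m * d) : ℝ) * α) = Int.fract (ρ + m * δ - K) := by
      have he : ρ + (↑(m * d) : ℝ) * α = (ρ + m * δ - K) + ((m * ⌊(d:ℝ)*α⌋ + K : ℤ) : ℝ) := by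
        rw [hδdef]; unfold Int.fract; push_cast; ring
      rw [he, Int.fract_add_intCast]
    have ht1 : c ≤ ρ + m * δ - K := by rw [hrdef] at hmδ1; linarith
    have ht2 : ρ + m * δ - K < c + δ := by rw [hrdef] at hmδ2; linarith
    have hin : ρ + m * δ - K ∈ Set.Ico (0:ℝ) 1 := by
      constructor
      · have : 0 < c := by linarith
        linarith
      · linarith
    rw [hfr, Int.fract_eq_self.mpr hin]
    exact ⟨by linarith, by linarith⟩
  · -- step η backward
    set η := 1 - Int.fract ((d:ℝ) * α) with hηdef
    have hη0 : 0 < η := by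
      have := Int.fract_lt_one ((d:ℝ) * α); rw [hηdef]; linarith
    have hηε : η < ε := by rw [hηdef]; linarith
    set K : ℤ := ⌈c - ρ⌉ with hKdef
    have hr : (0:ℝ) ≤ ρ + (K:ℝ) - c := by
      have : (c - ρ) ≤ (K:ℝ) := Int.le_ceil _
      linarith
    set r := ρ + (K:ℝ) - c with hrdef
    set m := (⌈r / η⌉).toNat with hmdef
    have h2 : ((⌈r / η⌉).toNat : ℤ) = ⌈r / η⌉ :=
      Int.toNat_of_nonneg (Int.ceil_nonneg (div_nonneg hr hη0.le))
    have hmcast : (m:ℝ) = ((⌈r / η⌉ : ℤ) : ℝ) := by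
      rw [hmdef]; exact_mod_cast congrArg (fun z : ℤ => (z:ℝ)) h2
    have hmge : r / η ≤ (m:ℝ) := by rw [hmcast]; exact Int.le_ceil _
    have hmlt : (m:ℝ) < r / η + 1 := by rw [hmcast]; exact Int.ceil_lt_add_one _
    have hrη : r = (r / η) * η := by field_simp
    have hmη1 : r ≤ m * η := by nlinarith
    have hmη2 : (m:ℝ) * η < r + η := by nlinarith
    refine ⟨m * d, ?_⟩
    have hfr : Int.fract (ρ + (↑(m * d) : ℝ) * α) = Int.fract (ρ - m * η + K) := by
      have he : ρ + (↑(m * d) : ℝ) * α = (ρ - m * η + K) + ((m * ⌊(d:ℝ)*α⌋ + m - K : ℤ) : ℝ) := by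
        rw [hηdef]; unfold Int.fract; push_cast; ring
      rw [he, Int.fract_add_intCast]
    have ht1 : c - η < ρ - m * η + K := by rw [hrdef] at hmη2; linarith
    have ht2 : ρ - m * η + K ≤ c := by rw [hrdef] at hmη1; linarith
    have hin : ρ - m * η + K ∈ Set.Ico (0:ℝ) 1 := by
      exact ⟨by linarith, by linarith⟩
    rw [hfr, Int.fract_eq_self.mpr hin]
    exact ⟨by linarith, by linarith⟩

lemma fract_shift (a b : ℝ) : Int.fract (a + b) = Int.fract (Int.fract a + b) := by
  conv_lhs => rw [show a + b = (Int.fract a + b) + (⌊a⌋ : ℤ) by rw [Int.fract]; ring]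
  rw [Int.fract_add_intCast]


lemma fac_eq_wd (α ρ : ℝ) (i n : ℕ) :
    fac (sturmian α ρ) i n = wd α (Int.fract (ρ + i * α)) n := by
  unfold fac wd sturmian
  apply List.map_congr_left
  intro j _
  have h1 : ρ + (↑(i + j) : ℝ) * α = (ρ + i * α) + j * α := by push_cast; ring
  rw [h1, fract_shift]


lemma beta_inj (α : ℝ) (hirr : Irrational α) (k k' : ℕ) (hne : k ≠ k')
    (h : Int.fract ((k:ℝ) * α) = Int.fract ((k':ℝ) * α)) : False := by
  set a : ℤ := ⌊(k:ℝ)*α⌋ with ha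
  set b : ℤ := ⌊(k':ℝ)*α⌋ with hb
  have hlin : (k:ℝ) * α - (k':ℝ) * α = (a : ℝ) - (b : ℝ) := by
    unfold Int.fract at h; rw [← ha, ← hb] at h; linarith
  have hz : ((k:ℝ) - (k':ℝ)) ≠ 0 := by
    intro h0
    exact hne (by exact_mod_cast sub_eq_zero.mp h0)
  have hα : α = ((a - b : ℤ) : ℝ) / ((k:ℝ) - (k':ℝ)) := by
    rw [eq_div_iff hz]; push_cast; linarith [hlin]
  apply hirr
  refine ⟨((a - b : ℤ) : ℚ) / ((k:ℚ) - (k':ℚ)), ?_⟩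
  rw [hα]
  push_cast
  rfl

lemma bridge (α : ℝ) (n : ℕ) :
    ((Finset.Icc 1 n).filter
        (fun k => Int.fract ((k : ℝ) * α) ≤ Int.fract ((n : ℝ) * α))).card
    = ((Finset.Icc 1 n).filter
        (fun k : ℕ => Int.fract ((k : ℝ) * α) ≤ Int.fract ((n : ℝ) * α))).card := by
  have h1 : (do let a ← Finset.Icc 1 n; pure ((a:ℝ)) : Finset ℝ)
      = (Finset.Icc 1 n).image (Nat.cast : ℕ → ℝ) := by
    simp [Bind.bind, Pure.pure]
  rw [h1, Finset.filter_image]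
  exact Finset.card_image_of_injective _ Nat.cast_injective

theorem stmt_3 (α ρ : ℝ) (hα : α ∈ Set.Ioo (0:ℝ) 1) (hirr : Irrational α)
    (hρ : ρ ∈ Set.Ico (0:ℝ) 1) (n : ℕ) (hn : 1 ≤ n) :
    {w : List Bool | (∃ i, w = fac (sturmian α ρ) i n) ∧
        (w.count true : ℤ) = ⌈(n : ℝ) * α⌉}.ncard =
      ((Finset.Icc 1 n).filter
        (fun k => Int.fract ((k : ℝ) * α) ≤ Int.fract ((n : ℝ) * α))).card := by
  classical
  set β : ℕ → ℝ := fun k => 1 - Int.fract ((k:ℝ) * α) with hβdef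
  set T := (Finset.Icc 1 n).filter
      (fun k : ℕ => Int.fract ((k : ℝ) * α) ≤ Int.fract ((n : ℝ) * α)) with hTdef
  -- basic facts about β
  have hkirr : ∀ k : ℕ, 1 ≤ k → Irrational ((k:ℝ) * α) := fun k hk => hirr.natCast_mul (by omega)
  have hβmem : ∀ k : ℕ, 1 ≤ k → β k ∈ Set.Ioo (0:ℝ) 1 := by
    intro k hk
    have h1 := Int.fract_lt_one ((k:ℝ) * α)
    have h2 : Int.fract ((k:ℝ)*α) ≠ 0 := fract_ne_zero_of_irrational _ (hkirr k hk)
    have h3 := Int.fract_nonneg ((k:ℝ)*α)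
    constructor
    · simp only [hβdef]; linarith
    · simp only [hβdef]
      have : 0 < Int.fract ((k:ℝ)*α) := lt_of_le_of_ne h3 (Ne.symm h2)
      linarith
  have hβinj : ∀ k k' : ℕ, k ≠ k' → β k ≠ β k' := by
    intro k k' hne h
    simp only [hβdef] at h
    exact beta_inj α hirr k k' hne (by linarith)
  -- the right endpoint of the interval to the right of β k
  set γ : ℕ → ℝ := fun k =>
    (insert (1:ℝ) (((Finset.Icc 1 n).filter (fun j => β k < β j)).image β)).min'
      (Finset.insert_nonempty _ _) with hγdef
  have hγle1 : ∀ k, γ k ≤ 1 := fun k =>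
    Finset.min'_le _ _ (Finset.mem_insert_self _ _)
  have hγgt : ∀ k : ℕ, 1 ≤ k → β k < γ k := by
    intro k hk
    rw [hγdef]
    rw [Finset.lt_min'_iff]
    intro y hy
    rcases Finset.mem_insert.mp hy with rfl | hy
    · exact (hβmem k hk).2
    · obtain ⟨j, hj, rfl⟩ := Finset.mem_image.mp hy
      exact (Finset.mem_filter.mp hj).2
  have hγleβ : ∀ k j : ℕ, j ∈ Finset.Icc 1 n → β k < β j → γ k ≤ β j := by
    intro k j hj hlt
    apply Finset.min'_le
    exact Finset.mem_insert_of_mem (Finset.mem_image_of_mem β (Finset.mem_filter.mpr ⟨hj, hlt⟩))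
  -- select an orbit point in each interval (β k, γ k)
  have hsel : ∀ k : ℕ, ∃ i : ℕ, 1 ≤ k → k ≤ n →
      Int.fract (ρ + i * α) ∈ Set.Ioo (β k) (γ k) := by
    intro k
    by_cases hk : 1 ≤ k
    · obtain ⟨i, hi⟩ := orbit_hits α ρ (β k) (γ k) hirr (hβmem k hk).1.le (hγgt k hk) (hγle1 k)
      exact ⟨i, fun _ _ => hi⟩
    · exact ⟨0, fun h => absurd h hk⟩
  choose pt hpt using hsel
  set x : ℕ → ℝ := fun k => Int.fract (ρ + pt k * α) with hxdef
  have hx01 : ∀ k, x k ∈ Set.Ico (0:ℝ) 1 := fun k =>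
    ⟨Int.fract_nonneg _, Int.fract_lt_one _⟩
  set g : ℕ → List Bool := fun k => wd α (x k) n with hgdef
  -- ⌈nα⌉ = ⌊nα⌋ + 1
  have hceil : ⌈(n:ℝ) * α⌉ = ⌊(n:ℝ) * α⌋ + 1 := by
    have h1 : ((n:ℝ) * α) < ⌈(n:ℝ)*α⌉ :=
      lt_of_le_of_ne (Int.le_ceil _) ((hkirr n hn).ne_int ⌈(n:ℝ)*α⌉)
    have h2 : ⌊(n:ℝ)*α⌋ < ⌈(n:ℝ)*α⌉ := Int.floor_lt.mpr h1
    have h3 : ⌈(n:ℝ)*α⌉ ≤ ⌊(n:ℝ)*α⌋ + 1 := Int.ceil_le_floor_add_one _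
    omega
  -- membership in S rephrased
  have hSmem : ∀ w : List Bool,
      ((∃ i, w = fac (sturmian α ρ) i n) ∧ (w.count true : ℤ) = ⌈(n : ℝ) * α⌉) ↔
      (∃ i : ℕ, w = wd α (Int.fract (ρ + i * α)) n ∧ β n ≤ Int.fract (ρ + i * α)) := by
    intro w
    constructor
    · rintro ⟨⟨i, rfl⟩, hcount⟩
      refine ⟨i, by rw [fac_eq_wd], ?_⟩
      rw [fac_eq_wd, wd_count α _ hα ⟨Int.fract_nonneg _, Int.fract_lt_one _⟩ n,
        floor_add_left _ _ ⟨Int.fract_nonneg _, Int.fract_lt_one _⟩, hceil] at hcount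
      by_contra hcon
      rw [if_neg (by simpa [hβdef] using hcon)] at hcount
      omega
    · rintro ⟨i, rfl, hge⟩
      refine ⟨⟨i, by rw [fac_eq_wd]⟩, ?_⟩
      rw [wd_count α _ hα ⟨Int.fract_nonneg _, Int.fract_lt_one _⟩ n,
        floor_add_left _ _ ⟨Int.fract_nonneg _, Int.fract_lt_one _⟩, hceil,
        if_pos (by simpa [hβdef] using hge)]
  -- x k is in (β k, γ k) for k ∈ T, and β n ≤ β k < x k
  have hxk : ∀ k ∈ Finset.Icc 1 n, x k ∈ Set.Ioo (β k) (γ k) := by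
    intro k hk
    rw [Finset.mem_Icc] at hk
    exact hpt k hk.1 hk.2
  -- S = g '' T
  have hS : {w : List Bool | (∃ i, w = fac (sturmian α ρ) i n) ∧
      (w.count true : ℤ) = ⌈(n : ℝ) * α⌉} = g '' ↑T := by
    ext w
    rw [Set.mem_setOf_eq, hSmem w]
    constructor
    · rintro ⟨i, rfl, hge⟩
      set y := Int.fract (ρ + i * α) with hydef
      have hy01 : y ∈ Set.Ico (0:ℝ) 1 := ⟨Int.fract_nonneg _, Int.fract_lt_one _⟩
      -- take the k in Icc 1 n with β k ≤ y maximizing β k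
      have hMne : ((Finset.Icc 1 n).filter (fun j => β j ≤ y)).Nonempty :=
        ⟨n, Finset.mem_filter.mpr ⟨Finset.mem_Icc.mpr ⟨hn, le_rfl⟩, hge⟩⟩
      obtain ⟨k, hkmem, hkmax⟩ := Finset.exists_max_image _ β hMne
      have hk' := Finset.mem_filter.mp hkmem
      have hk1 : 1 ≤ k := (Finset.mem_Icc.mp hk'.1).1
      have hkn : k ≤ n := (Finset.mem_Icc.mp hk'.1).2
      refine ⟨k, ?_, ?_⟩
      · -- k ∈ T
        rw [hTdef, Finset.mem_coe, Finset.mem_filter]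
        refine ⟨hk'.1, ?_⟩
        have : β n ≤ β k := hkmax n (Finset.mem_filter.mpr ⟨Finset.mem_Icc.mpr ⟨hn, le_rfl⟩, hge⟩)
        simp only [hβdef] at this
        linarith
      · -- g k = w, i.e. wd α (x k) n = wd α y n
        rw [hgdef]
        rw [wd_eq_iff α (x k) y hα (hx01 k) hy01 n]
        intro j hj1 hjn
        have hjI : j ∈ Finset.Icc 1 n := Finset.mem_Icc.mpr ⟨hj1, hjn⟩
        have hxkk := hxk k hk'.1
        constructor
        · -- β j ≤ x k → β j ≤ y
          intro hle
          change β j ≤ x k at hle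
          have : ¬ (β k < β j) := by
            intro hlt
            have := hγleβ k j hjI hlt
            linarith [hxkk.2]
          push_neg at this
          calc (1 - Int.fract ((j:ℝ)*α)) = β j := rfl
            _ ≤ β k := this
            _ ≤ y := hk'.2
        · -- β j ≤ y → β j ≤ x k
          intro hle
          have hjM : j ∈ (Finset.Icc 1 n).filter (fun j => β j ≤ y) :=
            Finset.mem_filter.mpr ⟨hjI, hle⟩
          calc (1 - Int.fract ((j:ℝ)*α)) = β j := rfl
            _ ≤ β k := hkmax j hjM
            _ ≤ x k := hxkk.1.le
    · rintro ⟨k, hkT, rfl⟩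
      rw [hTdef, Finset.mem_coe, Finset.mem_filter] at hkT
      have hk1 : 1 ≤ k := (Finset.mem_Icc.mp hkT.1).1
      have hkn : k ≤ n := (Finset.mem_Icc.mp hkT.1).2
      refine ⟨pt k, rfl, ?_⟩
      have hxkk := hxk k hkT.1
      have : β n ≤ β k := by simp only [hβdef]; linarith [hkT.2]
      calc β n ≤ β k := this
        _ ≤ x k := hxkk.1.le
  -- injectivity of g on T
  have hinj : Set.InjOn g ↑T := by
    intro k hk k' hk' hgk
    by_contra hne
    rw [hTdef, Finset.mem_coe, Finset.mem_filter] at hk hk'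
    have hk1 : 1 ≤ k := (Finset.mem_Icc.mp hk.1).1
    have hkn : k ≤ n := (Finset.mem_Icc.mp hk.1).2
    have hk'1 : 1 ≤ k' := (Finset.mem_Icc.mp hk'.1).1
    have hk'n : k' ≤ n := (Finset.mem_Icc.mp hk'.1).2
    rw [hgdef] at hgk
    simp only at hgk
    rw [wd_eq_iff α (x k) (x k') hα (hx01 k) (hx01 k') n] at hgk
    have hxkk := hxk k hk.1
    have hxk'k := hxk k' hk'.1
    rcases (hβinj k k' hne).lt_or_gt with hlt | hlt
    · -- β k < β k' : β k' ≤ x k' but x k < γ k ≤ β k'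
      have h1 : β k' ≤ x k' := hxk'k.1.le
      have h2 : ¬ (β k' ≤ x k) := by
        have := hγleβ k k' hk'.1 hlt
        push_neg
        linarith [hxkk.2]
      exact h2 ((hgk k' hk'1 hk'n).mpr h1)
    · have h1 : β k ≤ x k := hxkk.1.le
      have h2 : ¬ (β k ≤ x k') := by
        have := hγleβ k' k hk.1 hlt
        push_neg
        linarith [hxk'k.2]
      exact h2 ((hgk k hk1 hkn).mp h1)
  rw [hS, Set.ncard_image_of_injOn hinj, Set.ncard_coe_finset, bridge α n]
end

section
/- Let α ∈ (0,1) be irrational and let u be a Sturmian sequence with slope α. For every n ≥ 1, the number of factors of u of length n with Parikh vector (⌈(1−α)n⌉, ⌊nα⌋) equals n + 1 − P_α(n), where P_α(n) = #{k ∈ {1,…,n} : {kα} ≤ {nα}}. -/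
open scoped Classical

/-!
Put `c k = {-kα}`. For `y ∈ [0, 1)` one has `⌊y + kα⌋ = ⌈kα⌉ - 1 + [c k ≤ y]`, and the factor of
length `n` at a position `i` with `{ρ + iα} = y` is the sequence of increments of `k ↦ ⌊y + kα⌋`,
`k ≤ n`. So the factor only depends on which of the points `c 0 = 0, …, c n` lie below `y`. These
points are distinct by irrationality, and every cell they cut out of `[0, 1)` contains some
`{ρ + iα}` by density, so the factors of length `n` are the `n + 1` distinct words at `y = c k`,
`k ≤ n`. The factor at `y` has `⌊nα⌋` letters `b` exactly when `y < c n`, and `c k < c n` means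
`k = 0` or `{kα} > {nα}`.
-/

open Filter Topology Finset

namespace Sturmian

lemma fac_succ {A : Type*} (s : ℕ → A) (i n : ℕ) : fac s i (n + 1) = fac s i n ++ [s (i + n)] := by
  simp [fac, List.range_succ]

@[simp]
lemma length_fac {A : Type*} (s : ℕ → A) (i n : ℕ) : (fac s i n).length = n := by
  simp [fac]

lemma take_fac {A : Type*} (s : ℕ → A) (i : ℕ) {k n : ℕ} (hk : k ≤ n) :
    (fac s i n).take k = fac s i k := by
  rw [fac, ← List.map_take, List.take_range, min_eq_left hk, fac]

lemma floor_add_eq_floor_add_ite {α : ℝ} (hα : α ∈ Set.Ico 0 1) (t : ℝ) :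
    ⌊t + α⌋ = ⌊t⌋ + if 1 - α ≤ Int.fract t then 1 else 0 := by
  conv_lhs => rw [← Int.floor_add_fract t, add_assoc, Int.floor_intCast_add]
  have := Int.fract_nonneg t
  have := Int.fract_lt_one t
  congr 1
  split_ifs with h
  · rw [Int.floor_eq_iff]; push_cast; constructor <;> linarith [hα.2]
  · rw [Int.floor_eq_iff]; push_cast; constructor <;> linarith [hα.1]

lemma floor_add_succ_mul {α : ℝ} (hα : α ∈ Set.Ico 0 1) (ρ : ℝ) (m : ℕ) :
    ⌊ρ + (m + 1 : ℕ) * α⌋ = ⌊ρ + m * α⌋ + if sturmian α ρ m then 1 else 0 := by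
  rw [Nat.cast_succ, add_one_mul, ← add_assoc, floor_add_eq_floor_add_ite hα, sturmian]
  split_ifs <;> simp_all

lemma count_true_fac_sturmian {α : ℝ} (hα : α ∈ Set.Ico 0 1) (ρ : ℝ) (n : ℕ) :
    ((fac (sturmian α ρ) 0 n).count true : ℤ) = ⌊ρ + n * α⌋ - ⌊ρ⌋ := by
  induction n with
  | zero => simp [fac]
  | succ n ih =>
    rw [fac_succ, List.count_append, Nat.cast_add, ih, floor_add_succ_mul hα ρ, zero_add]
    cases sturmian α ρ n <;> simp [sub_add_eq_add_sub]

lemma fac_sturmian_eq_iff_floor {α : ℝ} (hα : α ∈ Set.Ico 0 1) (y z : ℝ) (n : ℕ) :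
    fac (sturmian α y) 0 n = fac (sturmian α z) 0 n ↔
      ∀ k ≤ n, ⌊y + k * α⌋ - ⌊y⌋ = ⌊z + k * α⌋ - ⌊z⌋ := by
  constructor
  · intro h k hk
    rw [← count_true_fac_sturmian hα, ← count_true_fac_sturmian hα, ← take_fac _ _ hk,
      ← take_fac _ _ hk, h]
  · intro h
    refine List.map_congr_left fun j hj => ?_
    rw [List.mem_range] at hj
    have hstep := h (j + 1) hj
    rw [floor_add_succ_mul hα y, floor_add_succ_mul hα z] at hstep
    have hbit : (if sturmian α y j then (1 : ℤ) else 0) = if sturmian α z j then 1 else 0 := by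
      have := h j hj.le
      omega
    rw [zero_add]
    revert hbit
    cases sturmian α y j <;> cases sturmian α z j <;> simp

noncomputable def cut (α : ℝ) (k : ℕ) : ℝ := Int.fract (-(k * α))

lemma floor_add_eq_ceil_sub_one_add_ite {y : ℝ} (hy : y ∈ Set.Ico 0 1) (x : ℝ) :
    ⌊y + x⌋ = ⌈x⌉ - 1 + if Int.fract (-x) ≤ y then 1 else 0 := by
  have hx : y + x = (y - Int.fract (-x)) + (⌈x⌉ : ℤ) := by
    rw [Int.fract, Int.floor_neg]; push_cast; ring
  have := Int.fract_nonneg (-x)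
  have := Int.fract_lt_one (-x)
  rw [hx, Int.floor_add_intCast]
  split_ifs with h
  · have : ⌊y - Int.fract (-x)⌋ = 0 := by
      rw [Int.floor_eq_iff]; push_cast; constructor <;> linarith [hy.2]
    omega
  · have : ⌊y - Int.fract (-x)⌋ = -1 := by
      rw [Int.floor_eq_iff]; push_cast; constructor <;> linarith [hy.1]
    omega

lemma fac_sturmian_eq_iff {α : ℝ} (hα : α ∈ Set.Ico 0 1) {y z : ℝ} (hy : y ∈ Set.Ico 0 1)
    (hz : z ∈ Set.Ico 0 1) (n : ℕ) :
    fac (sturmian α y) 0 n = fac (sturmian α z) 0 n ↔ ∀ k ≤ n, (cut α k ≤ y ↔ cut α k ≤ z) := by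
  rw [fac_sturmian_eq_iff_floor hα, Int.floor_eq_zero_iff.2 hy, Int.floor_eq_zero_iff.2 hz]
  refine forall₂_congr fun k _ => ?_
  rw [floor_add_eq_ceil_sub_one_add_ite hy, floor_add_eq_ceil_sub_one_add_ite hz, cut]
  by_cases hky : Int.fract (-(k * α)) ≤ y <;> by_cases hkz : Int.fract (-(k * α)) ≤ z <;>
    simp [hky, hkz, ne_of_gt]

lemma count_eq_ceil_and_count_eq_floor_iff {w : List Bool} {n : ℕ} (hw : w.length = n) (x : ℝ) :
    ((w.count false : ℤ) = ⌈(1 - x) * n⌉ ∧ (w.count true : ℤ) = ⌊(n : ℝ) * x⌋) ↔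
      (w.count true : ℤ) = ⌊(n : ℝ) * x⌋ := by
  have hceil : ⌈(1 - x) * n⌉ = n - ⌊(n : ℝ) * x⌋ := by
    rw [show (1 - x) * n = -((n : ℝ) * x) + (n : ℤ) by push_cast; ring, Int.ceil_add_intCast,
      Int.ceil_neg]
    ring
  have hcount := List.count_false_add_count_true w
  rw [hceil, hw] at *
  constructor
  · exact And.right
  · intro h
    exact ⟨by omega, h⟩

lemma count_fac_sturmian_eq_iff_lt_cut {α : ℝ} (hα : α ∈ Set.Ico 0 1) (hirr : Irrational α)
    {y : ℝ} (hy : y ∈ Set.Ico 0 1) {n : ℕ} (hn : 1 ≤ n) :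
    (((fac (sturmian α y) 0 n).count false : ℤ) = ⌈(1 - α) * n⌉ ∧
      ((fac (sturmian α y) 0 n).count true : ℤ) = ⌊(n : ℝ) * α⌋) ↔ y < cut α n := by
  have hnα : (n : ℝ) * α ∉ Set.range Int.cast := fun ⟨z, hz⟩ =>
    (hirr.natCast_mul (by omega)).ne_int z hz.symm
  rw [count_eq_ceil_and_count_eq_floor_iff (length_fac _ 0 n), count_true_fac_sturmian hα,
    Int.floor_eq_zero_iff.2 hy, sub_zero, floor_add_eq_ceil_sub_one_add_ite hy,
    (Int.ceil_eq_floor_add_one_iff_notMem _).2 hnα, cut]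
  split_ifs with h <;> simp [h, lt_iff_not_ge]

lemma fac_sturmian_eq_fac_fract (α ρ : ℝ) (i n : ℕ) :
    fac (sturmian α ρ) i n = fac (sturmian α (Int.fract (ρ + i * α))) 0 n := by
  refine List.map_congr_left fun j _ => ?_
  have hshift : Int.fract (ρ + i * α) + j * α = ρ + ((i + j : ℕ) : ℝ) * α - ⌊ρ + i * α⌋ := by
    rw [Int.fract]; push_cast; ring
  rw [sturmian, sturmian, zero_add, hshift, Int.fract_sub_intCast]

lemma exists_add_nat_mul_mem_Ioo {x g a b : ℝ} (hg : 0 < g) (hgab : g < b - a) (hx : x ≤ a) :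
    ∃ j : ℕ, x + j * g ∈ Set.Ioo a b := by
  have hq := Nat.floor_le (div_nonneg (sub_nonneg.2 hx) hg.le)
  have hq' := Nat.lt_floor_add_one ((a - x) / g)
  rw [le_div_iff₀ hg] at hq
  rw [div_lt_iff₀ hg] at hq'
  refine ⟨⌊(a - x) / g⌋₊ + 1, ?_, ?_⟩ <;> push_cast <;> linarith

lemma exists_nat_mul_sub_int_ne_zero_abs_lt {α ε : ℝ} (hirr : Irrational α) (hε : 0 < ε) :
    ∃ (k : ℕ) (m : ℤ), k * α - m ≠ 0 ∧ |k * α - m| < ε := by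
  obtain ⟨N, hN⟩ := exists_nat_one_div_lt hε
  obtain ⟨k, hk, -, hkα⟩ := Real.exists_nat_abs_mul_sub_round_le α N.succ_pos
  refine ⟨k, round ((k : ℝ) * α), sub_ne_zero.2 ((hirr.natCast_mul hk.ne').ne_int _), ?_⟩
  refine hkα.trans_lt ((one_div_le_one_div_of_le (by positivity) ?_).trans_lt hN)
  push_cast
  linarith

lemma exists_fract_add_nat_mul_mem_Ioo {α : ℝ} (hirr : Irrational α) (ρ : ℝ) {a b : ℝ}
    (ha : 0 ≤ a) (hab : a < b) (hb : b ≤ 1) : ∃ i : ℕ, Int.fract (ρ + i * α) ∈ Set.Ioo a b := by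
  obtain ⟨k, m, hg0, hgab⟩ := exists_nat_mul_sub_int_ne_zero_abs_lt hirr (sub_pos.2 hab)
  set g := k * α - m
  suffices ∃ (j : ℕ) (z : ℤ), ρ + j * g + z ∈ Set.Ioo a b by
    obtain ⟨j, z, hj⟩ := this
    have hshift : ρ + ((j * k : ℕ) : ℝ) * α = ρ + j * g + z + ((j * m - z : ℤ) : ℝ) := by
      simp only [g]; push_cast; ring
    refine ⟨j * k, ?_⟩
    rwa [hshift, Int.fract_add_intCast, Int.fract_eq_self.2 ⟨ha.trans hj.1.le, hj.2.trans_le hb⟩]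
  have hfloor := Int.floor_add_fract ρ
  have := Int.fract_nonneg ρ
  have := Int.fract_lt_one ρ
  rcases hg0.lt_or_gt with hneg | hpos
  · rw [abs_of_neg hneg] at hgab
    obtain ⟨j, hj⟩ := exists_add_nat_mul_mem_Ioo (x := -(Int.fract ρ + 1)) (a := -b) (b := -a)
      (neg_pos.2 hneg) (by linarith) (by linarith)
    refine ⟨j, 1 - ⌊ρ⌋, ?_, ?_⟩ <;> push_cast <;> linarith [hj.1, hj.2]
  · rw [abs_of_pos hpos] at hgab
    obtain ⟨j, hj⟩ := exists_add_nat_mul_mem_Ioo (x := Int.fract ρ - 1) hpos hgab (by linarith)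
    refine ⟨j, -1 - ⌊ρ⌋, ?_, ?_⟩ <;> push_cast <;> linarith [hj.1, hj.2]

lemma cut_zero (α : ℝ) : cut α 0 = 0 := by simp [cut]

lemma cut_mem_Ico (α : ℝ) (k : ℕ) : cut α k ∈ Set.Ico 0 1 :=
  ⟨Int.fract_nonneg _, Int.fract_lt_one _⟩

lemma cut_eq_one_sub_fract {α : ℝ} (hirr : Irrational α) {k : ℕ} (hk : k ≠ 0) :
    cut α k = 1 - Int.fract (k * α) :=
  Int.fract_neg (Int.fract_ne_zero_iff.2 fun ⟨z, hz⟩ => (hirr.natCast_mul hk).ne_int z hz.symm)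

lemma cut_injective {α : ℝ} (hirr : Irrational α) : Function.Injective (cut α) := by
  intro k j h
  obtain ⟨z, hz⟩ := Int.fract_eq_fract.1 h
  by_contra hkj
  have hne : (j : ℤ) - k ≠ 0 := sub_ne_zero.2 (by omega)
  exact (hirr.intCast_mul hne).ne_int z (by push_cast; linarith)

lemma exists_fac_eq_fac_cut {α : ℝ} (hα : α ∈ Set.Ico 0 1) (hirr : Irrational α) (ρ : ℝ)
    (n k : ℕ) : ∃ i, fac (sturmian α ρ) i n = fac (sturmian α (cut α k)) 0 n := by
  have hev : ∀ᶠ y in 𝓝[>] (cut α k), ∀ j ∈ Set.Iic n, (cut α j ≤ y ↔ cut α j ≤ cut α k) := by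
    refine (eventually_all_finite (Set.finite_Iic n)).2 fun j _ => ?_
    rcases le_or_gt (cut α j) (cut α k) with h | h
    · filter_upwards [self_mem_nhdsWithin] with y hy
      exact iff_of_true (h.trans (le_of_lt hy)) h
    · filter_upwards [nhdsWithin_le_nhds (eventually_lt_nhds h)] with y hy
      exact iff_of_false hy.not_ge h.not_ge
  obtain ⟨u, hu, hsub⟩ := (mem_nhdsGT_iff_exists_mem_Ioc_Ioo_subset (cut_mem_Ico α k).2).1 hev
  obtain ⟨i, hi⟩ := exists_fract_add_nat_mul_mem_Ioo hirr ρ (cut_mem_Ico α k).1 hu.1 hu.2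
  refine ⟨i, ?_⟩
  rw [fac_sturmian_eq_fac_fract, fac_sturmian_eq_iff hα ⟨Int.fract_nonneg _, Int.fract_lt_one _⟩
    (cut_mem_Ico α k)]
  exact hsub hi

lemma exists_fac_eq_fac_cut_of_mem_Ico {α : ℝ} (hα : α ∈ Set.Ico 0 1) {y : ℝ}
    (hy : y ∈ Set.Ico 0 1) (n : ℕ) :
    ∃ k ≤ n, fac (sturmian α y) 0 n = fac (sturmian α (cut α k)) 0 n := by
  obtain ⟨k, hk, hmax⟩ := ((range (n + 1)).filter (cut α · ≤ y)).exists_max_image (cut α)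
    ⟨0, by simp [cut_zero, hy.1]⟩
  rw [mem_filter, mem_range] at hk
  refine ⟨k, by omega, (fac_sturmian_eq_iff hα hy (cut_mem_Ico α k) n).2 fun j hj => ?_⟩
  exact ⟨fun h => hmax j (mem_filter.2 ⟨mem_range.2 (by omega), h⟩), fun h => h.trans hk.2⟩

lemma exists_eq_fac_iff {α : ℝ} (hα : α ∈ Set.Ico 0 1) (hirr : Irrational α) (ρ : ℝ) (n : ℕ)
    (w : List Bool) :
    (∃ i, w = fac (sturmian α ρ) i n) ↔ ∃ k ≤ n, w = fac (sturmian α (cut α k)) 0 n := by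
  constructor
  · rintro ⟨i, rfl⟩
    rw [fac_sturmian_eq_fac_fract]
    exact exists_fac_eq_fac_cut_of_mem_Ico hα ⟨Int.fract_nonneg _, Int.fract_lt_one _⟩ n
  · rintro ⟨k, -, rfl⟩
    obtain ⟨i, hi⟩ := exists_fac_eq_fac_cut hα hirr ρ n k
    exact ⟨i, hi.symm⟩

lemma injOn_fac_sturmian_cut {α : ℝ} (hα : α ∈ Set.Ico 0 1) (hirr : Irrational α) (n : ℕ) :
    Set.InjOn (fun k => fac (sturmian α (cut α k)) 0 n) (Set.Iic n) := by
  intro k hk j hj h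
  have hcut := (fac_sturmian_eq_iff hα (cut_mem_Ico α k) (cut_mem_Ico α j) n).1 h
  exact cut_injective hirr (le_antisymm ((hcut k hk).1 le_rfl) ((hcut j hj).2 le_rfl))

lemma card_filter_cut_lt {α : ℝ} (hirr : Irrational α) {n : ℕ} (hn : 1 ≤ n) :
    ((range (n + 1)).filter (fun k => cut α k < cut α n)).card =
      n + 1 - ((Finset.Icc 1 n).filter
        (fun k => Int.fract ((k : ℝ) * α) ≤ Int.fract ((n : ℝ) * α))).card := by
  -- `(k : ℝ)` makes the filter run over `Icc 1 n` lifted to `Finset ℝ` by the `Finset` monad.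
  have hcast : (Finset.Icc 1 n >>= fun k => pure (k : ℝ)) = (Icc 1 n).image Nat.cast := by
    rw [bind_pure_comp, Finset.fmap_def]
  rw [hcast, filter_image, card_image_of_injective _ Nat.cast_injective]
  have hcompl : (range (n + 1)).filter (fun k => ¬ cut α k < cut α n) =
      (Icc 1 n).filter (fun k : ℕ => Int.fract (k * α) ≤ Int.fract (n * α)) := by
    have hn' := cut_eq_one_sub_fract hirr (by omega : n ≠ 0)
    have := Int.fract_lt_one ((n : ℝ) * α)
    ext k
    simp only [mem_filter, mem_range, mem_Icc, not_lt]
    rcases Nat.eq_zero_or_pos k with rfl | hk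
    · simp only [cut_zero]
      constructor
      · intro h; linarith [h.2]
      · intro h; omega
    · rw [cut_eq_one_sub_fract hirr hk.ne', hn']
      constructor
      · intro h; exact ⟨⟨hk, by omega⟩, by linarith [h.2]⟩
      · intro h; exact ⟨by omega, by linarith [h.2]⟩
  have := card_filter_add_card_filter_not (s := range (n + 1)) (fun k => cut α k < cut α n)
  rw [hcompl, card_range] at this
  omega

end Sturmian

open Sturmian

theorem stmt_4_general (α ρ : ℝ) (hα : α ∈ Set.Ioo (0:ℝ) 1) (hirr : Irrational α)
    (n : ℕ) (hn : 1 ≤ n) :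
    {w : List Bool | (∃ i, w = fac (sturmian α ρ) i n) ∧
        ((w.count false : ℤ) = ⌈(1 - α) * n⌉ ∧ (w.count true : ℤ) = ⌊(n : ℝ) * α⌋)}.ncard =
      n + 1 - ((Finset.Icc 1 n).filter
        (fun k => Int.fract ((k : ℝ) * α) ≤ Int.fract ((n : ℝ) * α))).card := by
  have hα' : α ∈ Set.Ico 0 1 := Set.Ioo_subset_Ico_self hα
  set K := (range (n + 1)).filter (fun k => cut α k < cut α n)
  have hK : {w : List Bool | (∃ i, w = fac (sturmian α ρ) i n) ∧
        ((w.count false : ℤ) = ⌈(1 - α) * n⌉ ∧ (w.count true : ℤ) = ⌊(n : ℝ) * α⌋)} =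
      K.image fun k => fac (sturmian α (cut α k)) 0 n := by
    ext w
    simp only [Set.mem_ofPred_eq, exists_eq_fac_iff hα' hirr, coe_image, Set.mem_image, mem_coe,
      K, mem_filter, mem_range, Nat.lt_succ_iff]
    constructor
    · rintro ⟨⟨k, hk, rfl⟩, hw⟩
      exact ⟨k, ⟨hk, (count_fac_sturmian_eq_iff_lt_cut hα' hirr (cut_mem_Ico α k) hn).1 hw⟩, rfl⟩
    · rintro ⟨k, ⟨hk, hlt⟩, rfl⟩
      exact ⟨⟨k, hk, rfl⟩, (count_fac_sturmian_eq_iff_lt_cut hα' hirr (cut_mem_Ico α k) hn).2 hlt⟩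
  rw [hK, Set.ncard_coe_finset, card_image_of_injOn, card_filter_cut_lt hirr hn]
  exact (injOn_fac_sturmian_cut hα' hirr n).mono fun k hk =>
    Nat.lt_succ_iff.1 (mem_range.1 (mem_filter.1 hk).1)

theorem stmt_4 (α ρ : ℝ) (hα : α ∈ Set.Ioo (0:ℝ) 1) (hirr : Irrational α)
    (hρ : ρ ∈ Set.Ico (0:ℝ) 1) (n : ℕ) (hn : 1 ≤ n) :
    {w : List Bool | (∃ i, w = fac (sturmian α ρ) i n) ∧
        ((w.count false : ℤ) = ⌈(1 - α) * n⌉ ∧ (w.count true : ℤ) = ⌊(n : ℝ) * α⌋)}.ncard =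
      n + 1 - ((Finset.Icc 1 n).filter
        (fun k => Int.fract ((k : ℝ) * α) ≤ Int.fract ((n : ℝ) * α))).card :=
  stmt_4_general α ρ hα hirr n hn
end

section
/- Let u be a Sturmian sequence with irrational slope α, a = 1^ω, b a Sturmian sequence over {2,3}, and v = colour(u, a, b). Then the abelian complexity of v satisfies C^{ab}_v(n) ≤ 4 for every n ≥ 1. -/
open scoped Classical

/-- Sturmian sequence over the alphabet `{2,3}` with slope `γ` and intercept `ρ`. -/
noncomputable def sturmian23 (γ ρ : ℝ) (n : ℕ) : ℕ :=
  if 1 - γ ≤ Int.fract (ρ + n * γ) then 3 else 2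

lemma floor_step' {β : ℝ} (hβ : β ∈ Set.Ioo (0:ℝ) 1) (x : ℝ) :
    (if 1 - β ≤ Int.fract x then (1:ℤ) else 0) = ⌊x + β⌋ - ⌊x⌋ := by
  obtain ⟨h0, h1⟩ := hβ
  have hfr : x - ⌊x⌋ = Int.fract x := Int.self_sub_floor x
  have hf0 := Int.fract_nonneg x
  have hf1 := Int.fract_lt_one x
  split_ifs with h
  · have : ⌊x + β⌋ = ⌊x⌋ + 1 := by
      rw [Int.floor_eq_iff]
      constructor <;> push_cast <;> linarith
    omega
  · have : ⌊x + β⌋ = ⌊x⌋ := by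
      rw [Int.floor_eq_iff]
      constructor <;> push_cast <;> linarith
    omega

lemma window_count' {β : ℝ} (hβ : β ∈ Set.Ioo (0:ℝ) 1) (ρ : ℝ) (i n : ℕ) :
    (((Finset.range n).filter (fun k => 1 - β ≤ Int.fract (ρ + (i + k : ℕ) * β))).card : ℤ)
      = ⌊ρ + (i + n : ℕ) * β⌋ - ⌊ρ + (i : ℕ) * β⌋ := by
  induction n with
  | zero => simp
  | succ n ih =>
    have key := floor_step' hβ (ρ + (i + n : ℕ) * β)
    have harg : ρ + (i + n : ℕ) * β + β = ρ + ((i + (n+1) : ℕ) : ℝ) * β := by push_cast; ring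
    rw [harg] at key
    rw [Finset.range_add_one, Finset.filter_insert]
    split_ifs with h
    · rw [Finset.card_insert_of_notMem (by simp)]
      rw [if_pos h] at key
      push_cast at ih key ⊢
      omega
    · rw [if_neg h] at key
      push_cast at ih key ⊢
      omega

lemma window_bound' {β : ℝ} (y : ℝ) (n : ℕ) :
    ⌊y + n * β⌋ - ⌊y⌋ = ⌊(n : ℝ) * β⌋ ∨ ⌊y + n * β⌋ - ⌊y⌋ = ⌊(n : ℝ) * β⌋ + 1 := by
  have h : y + n * β = (⌊y⌋ : ℝ) + (Int.fract y + n * β) := by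
    have := Int.self_sub_floor y; linarith
  rw [h, Int.floor_intCast_add]
  have h1 : ⌊(n:ℝ) * β⌋ ≤ ⌊Int.fract y + n * β⌋ :=
    Int.floor_le_floor (by have := Int.fract_nonneg y; linarith)
  have h2 : ⌊Int.fract y + n * β⌋ ≤ ⌊(n:ℝ) * β⌋ + 1 := by
    have : ⌊Int.fract y + n * β⌋ ≤ ⌊(n:ℝ) * β + 1⌋ :=
      Int.floor_le_floor (by have := Int.fract_lt_one y; linarith)
    simpa using this
  omega

lemma count_fac' (s : ℕ → ℕ) (i n x : ℕ) :
    (fac s i n).count x = ((Finset.range n).filter (fun j => s (i + j) = x)).card := by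
  induction n with
  | zero => simp [fac]
  | succ n ih =>
    rw [fac, List.range_succ, List.map_append, List.count_append,
        Finset.range_add_one, Finset.filter_insert]
    simp only [List.map_cons, List.map_nil]
    rw [show ((List.range n).map (fun j => s (i + j))) = fac s i n from rfl, ih]
    by_cases h : s (i + n) = x
    · rw [if_pos h, Finset.card_insert_of_notMem (by simp)]
      simp [h]
    · rw [if_neg h]
      simp [List.count_cons, h]

lemma countB_succ' (u : ℕ → Bool) (m : ℕ) :
    countB u (m + 1) = countB u m + (if u m then 1 else 0) := by
  unfold countB
  rw [Finset.range_add_one, Finset.filter_insert]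
  split_ifs with h
  · rw [Finset.card_insert_of_notMem (by simp)]
  · rfl

lemma colour_count_b' (u : ℕ → Bool) (b : ℕ → ℕ) (x : ℕ) (hx : x ≠ 1)
    (i n : ℕ) :
    ((Finset.range n).filter (fun j => colour u (fun _ => 1) b (i + j) = x)).card
      + ((Finset.range (countB u i)).filter (fun k => b k = x)).card
      = ((Finset.range (countB u (i + n))).filter (fun k => b k = x)).card := by
  induction n with
  | zero => simp
  | succ n ih =>
    rw [Finset.range_add_one, Finset.filter_insert, show i + (n+1) = (i+n) + 1 from rfl,
        countB_succ']
    by_cases hu : u (i + n)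
    · have hv : colour u (fun _ => 1) b (i + n) = b (countB u (i + n)) := by
        simp [colour, hu]
      rw [if_pos hu, Finset.range_add_one, Finset.filter_insert]
      by_cases hb : b (countB u (i + n)) = x
      · rw [if_pos (by rw [hv]; exact hb), if_pos hb,
            Finset.card_insert_of_notMem (by simp),
            Finset.card_insert_of_notMem (by simp)]
        omega
      · rw [if_neg (by rw [hv]; exact hb), if_neg hb]
        exact ih
    · have hv : colour u (fun _ => 1) b (i + n) = 1 := by
        simp [colour, hu]
      rw [if_neg (by rw [hv]; exact fun h => hx h.symm), if_neg hu]
      simpa using ih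

theorem stmt_6 (α ρ₁ γ ρ₂ : ℝ) (hα : α ∈ Set.Ioo (0:ℝ) 1) (hirrα : Irrational α)
    (hγ : γ ∈ Set.Ioo (0:ℝ) 1) (hirrγ : Irrational γ)
    (hρ₁ : ρ₁ ∈ Set.Ico (0:ℝ) 1) (hρ₂ : ρ₂ ∈ Set.Ico (0:ℝ) 1)
    (n : ℕ) (hn : 1 ≤ n) :
    {p : ℕ × ℕ × ℕ | ∃ i,
        p = ((fac (colour (sturmian α ρ₁) (fun _ => 1) (sturmian23 γ ρ₂)) i n).count 1,
             (fac (colour (sturmian α ρ₁) (fun _ => 1) (sturmian23 γ ρ₂)) i n).count 2,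
             (fac (colour (sturmian α ρ₁) (fun _ => 1) (sturmian23 γ ρ₂)) i n).count 3)}.ncard ≤ 4 := by
  set u := sturmian α ρ₁ with hu_def
  set b := sturmian23 γ ρ₂ with hb_def
  set v := colour u (fun _ => 1) b with hv_def
  set t : ℕ := (⌊(n : ℝ) * α⌋).toNat with ht_def
  set s : ℕ → ℕ := fun m => (⌊(m : ℝ) * γ⌋).toNat with hs_def
  -- the four candidate Parikh vectors
  set T : Set (ℕ × ℕ × ℕ) :=
    insert (n - t, t - s t, s t)
      (insert (n - t, t - (s t + 1), s t + 1)
        (insert (n - (t+1), (t+1) - s (t+1), s (t+1))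
          {(n - (t+1), (t+1) - (s (t+1) + 1), s (t+1) + 1)})) with hT_def
  have hu_true : ∀ k : ℕ, (u k = true) ↔ 1 - α ≤ Int.fract (ρ₁ + k * α) := by
    intro k
    rw [hu_def]
    unfold sturmian
    split_ifs with h <;> simp [h]
  have hb3 : ∀ k : ℕ, (b k = 3) ↔ 1 - γ ≤ Int.fract (ρ₂ + k * γ) := by
    intro k
    rw [hb_def]
    unfold sturmian23
    split_ifs with h <;> simp [h]
  -- countB of u in terms of floors
  have hcB : ∀ m : ℕ, (countB u m : ℤ) = ⌊ρ₁ + m * α⌋ - ⌊ρ₁⌋ := by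
    intro m
    have := window_count' hα ρ₁ 0 m
    simp only [zero_add, Nat.cast_zero, zero_mul, add_zero] at this
    rw [← this]
    congr 1
    unfold countB
    congr 1
    apply Finset.filter_congr
    intro k _
    simp [hu_true k]
  -- counts of 3 in b in terms of floors
  have hF : ∀ m : ℕ, (((Finset.range m).filter (fun k => b k = 3)).card : ℤ)
      = ⌊ρ₂ + m * γ⌋ - ⌊ρ₂⌋ := by
    intro m
    have := window_count' hγ ρ₂ 0 m
    simp only [zero_add, Nat.cast_zero, zero_mul, add_zero] at this
    rw [← this]
    congr 1
    congr 1
    apply Finset.filter_congr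
    intro k _
    simp [hb3 k]
  have key : ∀ i : ℕ, ∃ W c3 : ℕ, (W = t ∨ W = t + 1) ∧ (c3 = s W ∨ c3 = s W + 1) ∧
      ((fac v i n).count 1, (fac v i n).count 2, (fac v i n).count 3)
        = (n - W, W - c3, c3) := by
    intro i
    -- the window count of u
    set W : ℕ := ((Finset.range n).filter (fun k => u (i + k) = true)).card with hW_def
    have hW : (W : ℤ) = ⌊ρ₁ + ((i + n : ℕ) : ℝ) * α⌋ - ⌊ρ₁ + (i : ℕ) * α⌋ := by
      rw [hW_def, ← window_count' hα ρ₁ i n]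
      congr 1
      congr 1
      apply Finset.filter_congr
      intro k _
      simp [hu_true (i + k)]
    -- W ∈ {t, t+1}
    have hWt : W = t ∨ W = t + 1 := by
      have hb1 : ρ₁ + ((i + n : ℕ) : ℝ) * α = (ρ₁ + (i : ℕ) * α) + n * α := by
        push_cast; ring
      have := window_bound' (β := α) (ρ₁ + (i : ℕ) * α) n
      rw [hb1] at hW
      have htnn : (0:ℤ) ≤ ⌊(n : ℝ) * α⌋ :=
        Int.floor_nonneg.mpr (mul_nonneg (by positivity) hα.1.le)
      have htz : (t : ℤ) = ⌊(n : ℝ) * α⌋ := by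
        rw [ht_def]; exact Int.toNat_of_nonneg htnn
      omega
    -- countB additivity over the window
    have hcw : countB u (i + n) = countB u i + W := by
      have h1 := hcB (i + n)
      have h2 := hcB i
      omega
    -- count of 1's
    have hc1 : (fac v i n).count 1 + W = n := by
      rw [count_fac']
      have hfil : (Finset.range n).filter (fun j => v (i + j) = 1)
          = (Finset.range n).filter (fun j => ¬ (u (i + j) = true)) := by
        apply Finset.filter_congr
        intro j _
        constructor
        · intro h hcontra
          rw [hv_def] at h
          unfold colour at h
          rw [if_pos hcontra] at h
          rw [hb_def] at h
          unfold sturmian23 at h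
          split_ifs at h <;> omega
        · intro h
          rw [hv_def]
          unfold colour
          rw [if_neg (by simpa using h)]
      have e := Finset.card_filter_add_card_filter_not
        (s := Finset.range n) (p := fun k => u (i + k) = true)
      rw [Finset.card_range] at e
      rw [hfil, hW_def, Nat.add_comm]
      exact e
    -- count of 3's
    set c3 : ℕ := (fac v i n).count 3 with hc3_def
    have hc3W : (c3 : ℤ) = ⌊(ρ₂ + (countB u i : ℝ) * γ) + (W : ℝ) * γ⌋
        - ⌊ρ₂ + (countB u i : ℝ) * γ⌋ := by
      have h := colour_count_b' u b 3 (by norm_num) i n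
      rw [show colour u (fun _ => 1) b = v from rfl] at h
      have h1 := hF (countB u i)
      have h2 := hF (countB u (i + n))
      have harg : ρ₂ + ((countB u (i + n) : ℕ) : ℝ) * γ
          = (ρ₂ + (countB u i : ℝ) * γ) + (W : ℝ) * γ := by
        rw [hcw]; push_cast; ring
      rw [harg] at h2
      rw [hc3_def, count_fac']
      omega
    have hc3s : c3 = s W ∨ c3 = s W + 1 := by
      have := window_bound' (β := γ) (ρ₂ + (countB u i : ℝ) * γ) W
      have hsnn : (0:ℤ) ≤ ⌊(W : ℝ) * γ⌋ :=
        Int.floor_nonneg.mpr (mul_nonneg (by positivity) hγ.1.le)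
      have hsz : ((s W : ℕ) : ℤ) = ⌊(W : ℝ) * γ⌋ := by
        rw [hs_def]; exact Int.toNat_of_nonneg hsnn
      omega
    -- sum of the three counts is n
    have hsum : (fac v i n).count 1 + (fac v i n).count 2 + (fac v i n).count 3 = n := by
      have hval : ∀ j : ℕ, v j = 1 ∨ v j = 2 ∨ v j = 3 := by
        intro j
        rw [hv_def, hb_def]
        unfold colour sturmian23
        split_ifs <;> simp
      rw [count_fac', count_fac', count_fac']
      have e1 := Finset.card_filter_add_card_filter_not
        (s := Finset.range n) (p := fun j => v (i + j) = 1)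
      have e2 := Finset.card_filter_add_card_filter_not
        (s := (Finset.range n).filter (fun j => ¬ v (i + j) = 1))
        (p := fun j => v (i + j) = 2)
      rw [Finset.filter_filter, Finset.filter_filter] at e2
      have e3 : (Finset.range n).filter (fun j => ¬ v (i + j) = 1 ∧ v (i + j) = 2)
          = (Finset.range n).filter (fun j => v (i + j) = 2) := by
        apply Finset.filter_congr
        intro j _
        have := hval (i + j)
        constructor
        · rintro ⟨_, h⟩; exact h
        · intro h; exact ⟨by omega, h⟩
      have e4 : (Finset.range n).filter (fun j => ¬ v (i + j) = 1 ∧ ¬ v (i + j) = 2)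
          = (Finset.range n).filter (fun j => v (i + j) = 3) := by
        apply Finset.filter_congr
        intro j _
        have := hval (i + j)
        constructor
        · rintro ⟨h1, h2⟩; omega
        · intro h; omega
      rw [e3, e4] at e2
      rw [Finset.card_range] at e1
      omega
    refine ⟨W, c3, hWt, hc3s, ?_⟩
    have : (fac v i n).count 1 = n - W := by omega
    have h2 : (fac v i n).count 2 = W - c3 := by omega
    rw [this, h2]
  -- the set is contained in T
  have hsub : {p : ℕ × ℕ × ℕ | ∃ i,
      p = ((fac v i n).count 1, (fac v i n).count 2, (fac v i n).count 3)} ⊆ T := by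
    rintro p ⟨i, rfl⟩
    obtain ⟨W, c3, hW, hc3, heq⟩ := key i
    rw [heq, hT_def]
    rcases hW with rfl | rfl <;> rcases hc3 with rfl | rfl <;>
      simp [Set.mem_insert_iff]
  have hTfin : T.Finite := by
    rw [hT_def]
    exact ((((Set.finite_singleton _).insert _).insert _).insert _)
  calc {p : ℕ × ℕ × ℕ | ∃ i,
      p = ((fac v i n).count 1, (fac v i n).count 2, (fac v i n).count 3)}.ncard
      ≤ T.ncard := Set.ncard_le_ncard hsub hTfin
    _ ≤ 4 := by
        rw [hT_def]
        have h1 := Set.ncard_insert_le (n - t, t - s t, s t)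
          (insert (n - t, t - (s t + 1), s t + 1)
            (insert (n - (t+1), (t+1) - s (t+1), s (t+1))
              {(n - (t+1), (t+1) - (s (t+1) + 1), s (t+1) + 1)}))
        have h2 := Set.ncard_insert_le (n - t, t - (s t + 1), s t + 1)
          (insert (n - (t+1), (t+1) - s (t+1), s (t+1))
            {(n - (t+1), (t+1) - (s (t+1) + 1), s (t+1) + 1)})
        have h3 := Set.ncard_insert_le (n - (t+1), (t+1) - s (t+1), s (t+1))
          ({(n - (t+1), (t+1) - (s (t+1) + 1), s (t+1) + 1)} : Set (ℕ × ℕ × ℕ))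
        have h4 : ({(n - (t+1), (t+1) - (s (t+1) + 1), s (t+1) + 1)} : Set (ℕ × ℕ × ℕ)).ncard = 1 :=
          Set.ncard_singleton _
        omega
end

section
/- Let α, γ ∈ (0,1) be irrational. Define S : [0,1)² → [0,1)² by S(x,y) = ({x+α}, y) if x ∈ [0, 1−α) and S(x,y) = ({x+α}, {y+γ}) if x ∈ [1−α, 1). Then for every n ∈ ℕ, Sⁿ(0,0) = ({αn}, {γ⌊αn⌋}). -/
open scoped Classical

/-- The rectangle exchange transformation on `[0,1)²` with parameters `α, γ`. -/
noncomputable def rectS (α γ : ℝ) (p : ℝ × ℝ) : ℝ × ℝ :=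
  if p.1 < 1 - α then (Int.fract (p.1 + α), p.2)
  else (Int.fract (p.1 + α), Int.fract (p.2 + γ))

theorem stmt_8 (α γ : ℝ) (hα : α ∈ Set.Ioo (0:ℝ) 1) (hirrα : Irrational α)
    (hγ : γ ∈ Set.Ioo (0:ℝ) 1) (hirrγ : Irrational γ) (n : ℕ) :
    (rectS α γ)^[n] (0, 0) =
      (Int.fract (α * n), Int.fract (γ * ⌊α * (n : ℝ)⌋)) := by
  have fract_fract_add : ∀ a b : ℝ, Int.fract (Int.fract a + b) = Int.fract (a + b) := by
    intro a b
    have h : Int.fract a + b = (a + b) - (⌊a⌋ : ℤ) := by rw [Int.fract]; push_cast; ring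
    rw [h, Int.fract_sub_intCast]
  induction n with
  | zero => simp [Int.fract]
  | succ n ih =>
    rw [Function.iterate_succ_apply', ih]
    set x := Int.fract (α * n) with hx
    have hx0 : 0 ≤ x := Int.fract_nonneg _
    have hx1 : x < 1 := Int.fract_lt_one _
    have hsucc : α * ((n : ℕ) + 1 : ℕ) = (⌊α * n⌋ : ℝ) + (x + α) := by
      push_cast; rw [hx, Int.fract]; ring
    by_cases h : x < 1 - α
    · have hfloor : ⌊α * (((n : ℕ) + 1 : ℕ) : ℝ)⌋ = ⌊α * n⌋ := by
        rw [hsucc, add_comm, Int.floor_add_intCast]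
        have : ⌊x + α⌋ = 0 := by
          rw [Int.floor_eq_zero_iff]
          constructor
          · linarith [hα.1]
          · linarith
        omega
      simp only [rectS, h, if_pos]
      rw [hfloor, hx, fract_fract_add, Prod.mk.injEq]
      refine ⟨?_, rfl⟩
      congr 1
      push_cast
      ring
    · have hge : 1 ≤ x + α := by linarith
      have hfloor : ⌊α * (((n : ℕ) + 1 : ℕ) : ℝ)⌋ = ⌊α * n⌋ + 1 := by
        rw [hsucc, add_comm, Int.floor_add_intCast]
        have : ⌊x + α⌋ = 1 := by
          rw [Int.floor_eq_iff]
          push_cast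
          constructor
          · exact hge
          · linarith [hα.2]
        omega
      simp only [rectS, h, if_neg, not_false_iff]
      rw [hfloor, hx, fract_fract_add, fract_fract_add, Prod.mk.injEq]
      constructor
      · congr 1
        push_cast
        ring
      · congr 1
        push_cast
        ring
end

section
/- Let α, γ ∈ (0,1) and let S be the rectangle exchange S(x,y) = ({x+α}, y) for x ∈ [0,1−α), S(x,y) = ({x+α}, {y+γ}) for x ∈ [1−α,1). Let R_θ be the rotation of the torus [0,1)² by the vector θ = (α, αγ), and define Φ : [0,1)² → [0,1)² by Φ(x,y) = (x, {y − γx}). Then Φ ∘ R_θ = S ∘ Φ, and consequently Φ ∘ R_θ^k = S^k ∘ Φ for every k ≥ 1. -/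
open scoped Classical

/-- The rotation of the torus `[0,1)²` by the vector `θ = (α, αγ)`. -/
noncomputable def rot (α γ : ℝ) (p : ℝ × ℝ) : ℝ × ℝ :=
  (Int.fract (p.1 + α), Int.fract (p.2 + α * γ))

/-- The conjugating map `Φ(x,y) = (x, {y - γx})`. -/
noncomputable def Phi (γ : ℝ) (p : ℝ × ℝ) : ℝ × ℝ :=
  (p.1, Int.fract (p.2 - γ * p.1))

/-!
Writing `{x + α} = x + α - ⌊x + α⌋`, the second coordinate of `Φ(R_θ(x,y))` is
`{y - γx + γ⌊x + α⌋}`. For `x ∈ [0,1)` and `α ∈ (0,1)` the integer `⌊x + α⌋` is `0` or `1`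
according as `x < 1 - α` or not, which is exactly the vertical shift `0` or `γ` that `S` applies
to `Φ(x,y)`. The identity holds on the whole strip `x ∈ [0,1)`, which `R_θ` maps into itself,
so it passes to all iterates.
-/

theorem iterate_semiconj_of_mapsTo {α β : Type*} {f : α → β} {ga : α → α} {gb : β → β}
    {s : Set α} (hs : Set.MapsTo ga s s) (h : ∀ x ∈ s, f (ga x) = gb (f x)) (n : ℕ) :
    ∀ x ∈ s, f (ga^[n] x) = gb^[n] (f x) := by
  induction n with
  | zero => simp
  | succ n ih =>
    intro x hx
    rw [Function.iterate_succ_apply, Function.iterate_succ_apply, ih _ (hs hx), h x hx]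

lemma floor_add_eq_ite {x α : ℝ} (hx : x ∈ Set.Ico 0 1) (hα : α ∈ Set.Ioo 0 1) :
    ⌊x + α⌋ = if x < 1 - α then 0 else 1 := by
  rw [Int.floor_eq_iff]
  split_ifs <;> push_cast <;> constructor <;> linarith [hx.1, hx.2, hα.1, hα.2]

lemma Phi_rot (α γ : ℝ) (p : ℝ × ℝ) :
    Phi γ (rot α γ p) =
      (Int.fract (p.1 + α), Int.fract (p.2 - γ * p.1 + γ * ⌊p.1 + α⌋)) := by
  refine Prod.ext rfl (Int.fract_eq_fract.mpr ⟨-⌊p.2 + α * γ⌋, ?_⟩)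
  simp only [rot, Int.fract]
  push_cast
  ring

lemma rectS_Phi (α γ : ℝ) (p : ℝ × ℝ) :
    rectS α γ (Phi γ p) =
      (Int.fract (p.1 + α),
        Int.fract (p.2 - γ * p.1 + γ * ((if p.1 < 1 - α then 0 else 1 : ℤ) : ℝ))) := by
  simp only [rectS, Phi]
  by_cases h : p.1 < 1 - α
  · simp [h]
  · simp only [h, ↓reduceIte, Int.cast_one, mul_one]
    refine Prod.ext rfl (Int.fract_eq_fract.mpr ⟨-⌊p.2 - γ * p.1⌋, ?_⟩)
    simp only [Int.fract]
    push_cast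
    ring

lemma Phi_rot_eq_rectS_Phi {α : ℝ} (γ : ℝ) (hα : α ∈ Set.Ioo 0 1) {p : ℝ × ℝ}
    (hp : p.1 ∈ Set.Ico 0 1) : Phi γ (rot α γ p) = rectS α γ (Phi γ p) := by
  rw [Phi_rot, rectS_Phi, floor_add_eq_ite hp hα]

lemma mapsTo_rot_fst_mem_Ico (α γ : ℝ) :
    Set.MapsTo (rot α γ) {p | p.1 ∈ Set.Ico 0 1} {p | p.1 ∈ Set.Ico 0 1} :=
  fun _ _ => ⟨Int.fract_nonneg _, Int.fract_lt_one _⟩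

theorem stmt_10_general (α γ : ℝ) (hα : α ∈ Set.Ioo (0:ℝ) 1)
    (p : ℝ × ℝ) (hp : p ∈ Set.Ico (0:ℝ) 1 ×ˢ Set.Ico (0:ℝ) 1) :
    Phi γ (rot α γ p) = rectS α γ (Phi γ p) ∧
    ∀ k : ℕ, 1 ≤ k → Phi γ ((rot α γ)^[k] p) = (rectS α γ)^[k] (Phi γ p) :=
  ⟨Phi_rot_eq_rectS_Phi γ hα hp.1, fun k _ =>
    iterate_semiconj_of_mapsTo (mapsTo_rot_fst_mem_Ico α γ)
      (fun _ hq => Phi_rot_eq_rectS_Phi γ hα hq) k p hp.1⟩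

theorem stmt_10 (α γ : ℝ) (hα : α ∈ Set.Ioo (0:ℝ) 1) (hγ : γ ∈ Set.Ioo (0:ℝ) 1)
    (p : ℝ × ℝ) (hp : p ∈ Set.Ico (0:ℝ) 1 ×ˢ Set.Ico (0:ℝ) 1) :
    Phi γ (rot α γ p) = rectS α γ (Phi γ p) ∧
    ∀ k : ℕ, 1 ≤ k → Phi γ ((rot α γ)^[k] p) = (rectS α γ)^[k] (Phi γ p) :=
  stmt_10_general α γ hα p hp
end

section
/- If 1, α, and αγ are rationally independent (i.e., the only rational solution of p + qα + rαγ = 0 with p,q,r ∈ ℚ is p = q = r = 0), then for every (x₀,y₀) ∈ [0,1)² the orbit {Sⁿ(x₀,y₀) : n ∈ ℕ} of the rectangle exchange S is dense in [0,1)². -/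
/-!
The map `Φ(x, y) = (x, {y − γx})` satisfies `S ∘ Φ = Φ ∘ R`, where `R` is the rotation of the
torus by `(α, αγ)`: when `x` wraps around, `{y − γx}` jumps by exactly the `γ` that `S` adds.
So the orbit of `(x₀, y₀)` is the image under `Φ` of an `R`-orbit, which is dense by Kronecker's
theorem, and `Φ` is continuous off the grid lines.

Kronecker's theorem (in any dimension `d`) is proved by Bohr's argument. If `nθ − c` never comes
`ε`-close to `ℤᵈ`, then `T(n) = 1 + ∑ᵢ e(nθᵢ − cᵢ)` satisfies `|T(n)| ≤ M < d + 1` for all `n`.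
By the multinomial theorem `T(n)ᵏ` is a sum of at most `(k + 1)^(d+1)` terms `aᵥ e(n ωᵥ)` whose
frequencies `ωᵥ` are pairwise distinct modulo `1` by the independence of `1, θ₁, …, θ_d`.
Averaging `T(n)ᵏ e(−n ωᵥ)` over `n` isolates `aᵥ`, so `|aᵥ| ≤ Mᵏ`; but `∑ᵥ |aᵥ| = (d + 1)ᵏ`,
and `(d + 1)ᵏ ≤ (k + 1)^(d+1) Mᵏ` fails for large `k`.
-/

open scoped Classical

open Real FourierTransform Filter Topology

section

open Finset

theorem fourierChar_eq_one_iff {x : ℝ} : 𝐞 x = 1 ↔ ∃ m : ℤ, x = m := by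
  rw [fourierChar_apply', Circle.exp_eq_one]
  refine exists_congr fun m => ?_
  constructor <;> intro h <;> nlinarith [pi_pos]

theorem norm_one_add_fourierChar_sq (w : ℝ) :
    ‖1 + (𝐞 w : ℂ)‖ ^ 2 = 2 + 2 * cos (2 * π * w) := by
  rw [Complex.sq_norm, Complex.normSq_apply, fourierChar_apply]
  simp only [Complex.add_re, Complex.add_im, Complex.one_re, Complex.one_im,
    Complex.exp_ofReal_mul_I_re, Complex.exp_ofReal_mul_I_im]
  nlinarith [sin_sq_add_cos_sq (2 * π * w)]

theorem cos_two_pi_mul_le_of_forall_le_abs_sub_int {w ε : ℝ} (hε : 0 ≤ ε)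
    (hw : ∀ m : ℤ, ε ≤ |w - m|) : cos (2 * π * w) ≤ cos (2 * π * ε) := by
  set r := w - round w
  have hr : |r| ≤ 1 / 2 := abs_sub_round w
  have hcos : cos (2 * π * w) = cos (2 * π * |r|) := by
    rw [← abs_of_pos two_pi_pos, ← abs_mul, cos_abs, abs_of_pos two_pi_pos,
      ← cos_sub_int_mul_two_pi (2 * π * w) (round w)]
    simp only [r]
    ring_nf
  rw [hcos]
  exact cos_le_cos_of_nonneg_of_le_pi (by positivity) (by nlinarith [pi_pos])
    (by nlinarith [pi_pos, hw (round w)])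

theorem norm_one_add_fourierChar_le {w ε : ℝ} (hε : 0 ≤ ε) (hw : ∀ m : ℤ, ε ≤ |w - m|) :
    ‖1 + (𝐞 w : ℂ)‖ ≤ 2 * cos (π * ε) := by
  have hε' : ε ≤ 1 / 2 := (hw (round w)).trans (abs_sub_round w)
  have hcos : 0 ≤ cos (π * ε) :=
    cos_nonneg_of_mem_Icc ⟨by nlinarith [pi_pos], by nlinarith [pi_pos]⟩
  refine le_of_sq_le_sq ?_ (mul_nonneg zero_le_two hcos)
  rw [norm_one_add_fourierChar_sq, mul_pow, cos_sq (π * ε)]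
  have := cos_two_pi_mul_le_of_forall_le_abs_sub_int hε hw
  ring_nf at this ⊢
  linarith

theorem tendsto_average_fourierChar_natCast_mul {Ω : ℝ} (hΩ : ∀ m : ℤ, Ω ≠ m) :
    Tendsto (fun N : ℕ => (N : ℂ)⁻¹ * ∑ n ∈ range N, (𝐞 (n * Ω) : ℂ)) atTop (𝓝 0) := by
  set z : ℂ := ((𝐞 Ω : Circle) : ℂ)
  have hz : z ≠ 1 := by
    intro h
    obtain ⟨m, hm⟩ := fourierChar_eq_one_iff.1 (Circle.ext_iff.2 h)
    exact hΩ m hm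
  have hsum : ∀ N : ℕ, ‖∑ n ∈ range N, (𝐞 (n * Ω) : ℂ)‖ ≤ 2 / ‖z - 1‖ := by
    intro N
    have hgeom : ∑ n ∈ range N, (𝐞 (n * Ω) : ℂ) = (z ^ N - 1) / (z - 1) := by
      rw [← geom_sum_eq hz]
      refine sum_congr rfl fun n _ => ?_
      rw [← nsmul_eq_mul, AddChar.map_nsmul_eq_pow, Circle.coe_pow]
    rw [hgeom, norm_div]
    gcongr
    calc ‖z ^ N - 1‖ ≤ ‖z ^ N‖ + ‖(1 : ℂ)‖ := norm_sub_le _ _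
      _ = 2 := by rw [norm_pow, Circle.norm_coe, one_pow, norm_one]; norm_num
  refine squeeze_zero_norm (fun N => ?_) (tendsto_const_div_atTop_nhds_zero_nat (2 / ‖z - 1‖))
  rw [norm_mul, norm_inv, Complex.norm_natCast, div_eq_inv_mul _ (N : ℝ)]
  exact mul_le_mul_of_nonneg_left (hsum N) (by positivity)

theorem norm_le_of_forall_norm_sum_mul_fourierChar_le {ι : Type*} {s : Finset ι} {a : ι → ℂ}
    {ω : ι → ℝ} (hω : ∀ i ∈ s, ∀ j ∈ s, ∀ m : ℤ, ω i - ω j = m → i = j) {B : ℝ}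
    (hB : ∀ n : ℕ, ‖∑ j ∈ s, a j * 𝐞 (n * ω j)‖ ≤ B) {i : ι} (hi : i ∈ s) : ‖a i‖ ≤ B := by
  set A : ℕ → ℂ := fun N =>
    (N : ℂ)⁻¹ * ∑ n ∈ range N, (∑ j ∈ s, a j * 𝐞 (n * ω j)) * 𝐞 (-(n * ω i))
  have hA : A = fun N : ℕ =>
      ∑ j ∈ s, a j * ((N : ℂ)⁻¹ * ∑ n ∈ range N, (𝐞 (n * (ω j - ω i)) : ℂ)) := by
    ext N
    simp only [A, sum_mul, mul_sum]
    rw [sum_comm]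
    refine sum_congr rfl fun j _ => sum_congr rfl fun n _ => ?_
    rw [mul_sub, sub_eq_add_neg, AddChar.map_add_eq_mul, Circle.coe_mul]
    ring
  have hlim : Tendsto A atTop (𝓝 (a i)) := by
    have hai : a i = ∑ j ∈ s, a j * if j = i then 1 else 0 := by simp [hi]
    rw [hA, hai]
    refine tendsto_finsetSum _ fun j hj => (Tendsto.const_mul _ ?_)
    split_ifs with hji
    · refine tendsto_const_nhds.congr' ?_
      filter_upwards [eventually_ne_atTop 0] with N hN
      simp [hji, hN]
    · exact tendsto_average_fourierChar_natCast_mul fun m hm => hji (hω j hj i hi m hm)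
  have hAB : ∀ᶠ N in atTop, ‖A N‖ ≤ B := by
    filter_upwards [eventually_ne_atTop 0] with N hN
    calc ‖A N‖ ≤ (N : ℝ)⁻¹ * ∑ n ∈ range N, B := by
          rw [norm_mul, norm_inv, Complex.norm_natCast]
          gcongr
          refine (norm_sum_le _ _).trans (sum_le_sum fun n _ => ?_)
          rw [norm_mul, Circle.norm_coe, mul_one]
          exact hB n
      _ = B := by
          rw [sum_const, card_range, nsmul_eq_mul]
          field_simp
  exact le_of_tendsto hlim.norm hAB

theorem Finset.sum_multinomial_piAntidiag {α : Type*} [DecidableEq α] (s : Finset α) (n : ℕ) :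
    ∑ k ∈ s.piAntidiag n, Nat.multinomial s k = s.card ^ n := by
  simpa using (sum_pow_eq_sum_piAntidiag s (fun _ => (1 : ℕ)) n).symm

theorem Finset.card_piAntidiag_univ_le {α : Type*} [DecidableEq α] [Fintype α] (n : ℕ) :
    (piAntidiag (univ : Finset α) n).card ≤ (n + 1) ^ Fintype.card α := by
  calc (piAntidiag (univ : Finset α) n).card
      ≤ (Fintype.piFinset fun _ : α => range (n + 1)).card := by
        refine card_le_card fun k hk => Fintype.mem_piFinset.2 fun i => ?_
        rw [mem_range, Nat.lt_succ_iff, ← (mem_piAntidiag.1 hk).1]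
        exact single_le_sum (fun _ _ => Nat.zero_le _) (mem_univ i)
    _ = (n + 1) ^ Fintype.card α := by simp

theorem exists_succ_pow_mul_pow_lt_pow (p : ℕ) {M R : ℝ} (hM : 0 ≤ M) (hMR : M < R) :
    ∃ k : ℕ, ((k : ℝ) + 1) ^ p * M ^ k < R ^ k := by
  have hR : 0 < R := hM.trans_lt hMR
  have hr : |M / R| < 1 := by
    rwa [abs_of_nonneg (by positivity), div_lt_one hR]
  have hlim := (tendsto_pow_const_mul_const_pow_of_abs_lt_one p hr).const_mul (2 ^ p)
  rw [mul_zero] at hlim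
  obtain ⟨k, hk, hk1⟩ := ((hlim.eventually_lt_const one_pos).and (eventually_ge_atTop 1)).exists
  refine ⟨k, ?_⟩
  have hk2 : (k : ℝ) + 1 ≤ 2 * k := by
    have : (1 : ℝ) ≤ k := by exact_mod_cast hk1
    linarith
  calc ((k : ℝ) + 1) ^ p * M ^ k ≤ (2 * k) ^ p * M ^ k := by gcongr
    _ = 2 ^ p * (k ^ p * (M / R) ^ k) * R ^ k := by
        rw [div_pow, mul_pow]; field_simp
    _ < 1 * R ^ k := by gcongr
    _ = R ^ k := one_mul _

theorem fourierChar_sum {κ : Type*} (s : Finset κ) (w : κ → ℝ) :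
    (𝐞 (∑ o ∈ s, w o) : ℂ) = ∏ o ∈ s, (𝐞 (w o) : ℂ) := by
  have := map_prod (Circle.coeHom.comp (𝐞).toMonoidHom) (fun o => Multiplicative.ofAdd (w o)) s
  simp only [← ofAdd_sum, MonoidHom.comp_apply, AddChar.toMonoidHom_apply] at this
  exact this

theorem sum_fourierChar_pow {κ : Type*} [Fintype κ] [DecidableEq κ] (θ c : κ → ℝ) (n k : ℕ) :
    (∑ o, (𝐞 (n * θ o - c o) : ℂ)) ^ k =
      ∑ v ∈ piAntidiag univ k,
        ((Nat.multinomial univ v : ℂ) * 𝐞 (-∑ o, v o * c o)) * 𝐞 (n * ∑ o, v o * θ o) := by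
  rw [sum_pow_eq_sum_piAntidiag]
  refine sum_congr rfl fun v _ => ?_
  have hexp : ∑ o, v o • (n * θ o - c o) = -∑ o, v o * c o + n * ∑ o, v o * θ o := by
    simp only [nsmul_eq_mul, mul_sum, ← sum_neg_distrib, ← sum_add_distrib]
    exact sum_congr rfl fun o _ => by ring
  rw [mul_assoc, ← Circle.coe_mul, ← AddChar.map_add_eq_mul, ← hexp, fourierChar_sum]
  simp only [AddChar.map_nsmul_eq_pow, Circle.coe_pow]

theorem eq_of_mem_piAntidiag_of_sum_sub_eq_int {ι : Type*} [Fintype ι] [DecidableEq ι]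
    {θ : ι → ℝ} (hθ : ∀ (q : ι → ℤ) (p : ℤ), ∑ i, q i * θ i = p → q = 0) {k : ℕ}
    {v v' : Option ι → ℕ} (hv : v ∈ piAntidiag univ k) (hv' : v' ∈ piAntidiag univ k) {m : ℤ}
    (h : ∑ o, v o * o.elim 0 θ - ∑ o, v' o * o.elim 0 θ = m) : v = v' := by
  have hsome : ∀ i, v (some i) = v' (some i) := by
    have hq := hθ (fun i => (v (some i) : ℤ) - v' (some i)) m (by
      simpa [Fintype.sum_option, sub_mul, sum_sub_distrib] using h)
    intro i
    have := congr_fun hq i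
    simp only [Pi.zero_apply, sub_eq_zero, Nat.cast_inj] at this
    exact this
  have hnone : v none = v' none := by
    have hsum := (mem_piAntidiag.1 hv).1.trans (mem_piAntidiag.1 hv').1.symm
    simp only [Fintype.sum_option, hsome] at hsum
    omega
  funext o
  cases o with
  | none => exact hnone
  | some i => exact hsome i

theorem norm_one_add_sum_fourierChar_le {ι : Type*} [Fintype ι] [DecidableEq ι] {w : ι → ℝ}
    {ε : ℝ} (hε : 0 ≤ ε) {i : ι} (hi : ∀ m : ℤ, ε ≤ |w i - m|) :
    ‖1 + ∑ j, (𝐞 (w j) : ℂ)‖ ≤ 2 * cos (π * ε) + (Fintype.card ι - 1) := by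
  rw [← add_sum_erase _ _ (mem_univ i), ← add_assoc]
  refine (norm_add_le _ _).trans (add_le_add (norm_one_add_fourierChar_le hε hi) ?_)
  calc ‖∑ j ∈ univ.erase i, (𝐞 (w j) : ℂ)‖ ≤ ∑ j ∈ univ.erase i, 1 :=
        (norm_sum_le _ _).trans (sum_le_sum fun j _ => (Circle.norm_coe _).le)
    _ = Fintype.card ι - 1 := by
        rw [sum_const, card_erase_of_mem (mem_univ i), card_univ, nsmul_one,
          Nat.cast_sub (Fintype.card_pos_iff.2 ⟨i⟩)]
        simp

theorem card_add_one_pow_le_of_forall_norm_le {ι : Type*} [Fintype ι] {θ : ι → ℝ}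
    (hθ : ∀ (q : ι → ℤ) (p : ℤ), ∑ i, q i * θ i = p → q = 0) (c : ι → ℝ) {M : ℝ}
    (hM : ∀ n : ℕ, ‖1 + ∑ i, (𝐞 (n * θ i - c i) : ℂ)‖ ≤ M) (k : ℕ) :
    ((Fintype.card ι : ℝ) + 1) ^ k ≤ ((k : ℝ) + 1) ^ (Fintype.card ι + 1) * M ^ k := by
  -- the constant term `1` becomes the coordinate `none`
  set θ' : Option ι → ℝ := fun o => o.elim 0 θ
  set c' : Option ι → ℝ := fun o => o.elim 0 c
  have hT : ∀ n : ℕ, ‖∑ o, (𝐞 (n * θ' o - c' o) : ℂ)‖ ≤ M := fun n => by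
    simpa [Fintype.sum_option, θ', c'] using hM n
  set s := piAntidiag (univ : Finset (Option ι)) k
  have hcoeff : ∀ v ∈ s, (Nat.multinomial univ v : ℝ) ≤ M ^ k := by
    intro v hv
    have hB : ∀ n : ℕ, ‖∑ v ∈ s, ((Nat.multinomial univ v : ℂ) * 𝐞 (-∑ o, v o * c' o)) *
        𝐞 (n * ∑ o, v o * θ' o)‖ ≤ M ^ k := fun n => by
      rw [← sum_fourierChar_pow, norm_pow]
      exact pow_le_pow_left₀ (norm_nonneg _) (hT n) k
    simpa [Circle.norm_coe] using norm_le_of_forall_norm_sum_mul_fourierChar_le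
      (fun v hv v' hv' m h => eq_of_mem_piAntidiag_of_sum_sub_eq_int hθ hv hv' h) hB hv
  have hcard : (s.card : ℝ) ≤ ((k : ℝ) + 1) ^ (Fintype.card ι + 1) := by
    exact_mod_cast (card_piAntidiag_univ_le k).trans_eq (by rw [Fintype.card_option])
  calc ((Fintype.card ι : ℝ) + 1) ^ k = ∑ v ∈ s, (Nat.multinomial univ v : ℝ) := by
        have := sum_multinomial_piAntidiag (univ : Finset (Option ι)) k
        rw [card_univ, Fintype.card_option] at this
        exact_mod_cast this.symm
    _ ≤ ∑ v ∈ s, M ^ k := sum_le_sum hcoeff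
    _ ≤ ((k : ℝ) + 1) ^ (Fintype.card ι + 1) * M ^ k := by
        rw [sum_const, nsmul_eq_mul]
        exact mul_le_mul_of_nonneg_right hcard (pow_nonneg ((norm_nonneg _).trans (hM 0)) k)

theorem kronecker_approximation {ι : Type*} [Fintype ι] {θ : ι → ℝ}
    (hθ : ∀ (q : ι → ℤ) (p : ℤ), ∑ i, q i * θ i = p → q = 0) (c : ι → ℝ) {ε : ℝ}
    (hε : 0 < ε) : ∃ n : ℕ, ∀ i, ∃ m : ℤ, |n * θ i - c i - m| < ε := by
  wlog hε' : ε ≤ 1 / 2 generalizing ε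
  · obtain ⟨n, hn⟩ := this (ε := 1 / 2) (by norm_num) le_rfl
    exact ⟨n, fun i => (hn i).imp fun m hm => hm.trans_le (by linarith)⟩
  by_contra! hfar
  set d := Fintype.card ι
  have hd : (1 : ℝ) ≤ d := by exact_mod_cast Fintype.card_pos_iff.2 ⟨(hfar 0).choose⟩
  have hcos₀ : 0 ≤ cos (π * ε) :=
    cos_nonneg_of_mem_Icc ⟨by nlinarith [pi_pos], by nlinarith [pi_pos]⟩
  have hcos₁ : cos (π * ε) < 1 := by
    rw [← cos_zero]
    exact cos_lt_cos_of_nonneg_of_le_pi le_rfl (by nlinarith [pi_pos]) (by positivity)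
  have hT : ∀ n : ℕ, ‖1 + ∑ i, (𝐞 (n * θ i - c i) : ℂ)‖ ≤ 2 * cos (π * ε) + (d - 1) :=
    fun n => norm_one_add_sum_fourierChar_le hε.le (hfar n).choose_spec
  obtain ⟨k, hk⟩ := exists_succ_pow_mul_pow_lt_pow (d + 1)
    (M := 2 * cos (π * ε) + (d - 1)) (R := d + 1) (by linarith) (by linarith)
  linarith [card_add_one_pow_le_of_forall_norm_le hθ c hT k]

theorem kronecker_approximation_two {θ₁ θ₂ : ℝ}
    (hθ : ∀ p q r : ℚ, (p : ℝ) + q * θ₁ + r * θ₂ = 0 → p = 0 ∧ q = 0 ∧ r = 0) (c₁ c₂ : ℝ)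
    {ε : ℝ} (hε : 0 < ε) :
    ∃ n : ℕ, ∃ m₁ m₂ : ℤ, |n * θ₁ - c₁ - m₁| < ε ∧ |n * θ₂ - c₂ - m₂| < ε := by
  have hθ' : ∀ (q : Fin 2 → ℤ) (p : ℤ), ∑ i, q i * ![θ₁, θ₂] i = p → q = 0 := by
    intro q p h
    obtain ⟨-, h₀, h₁⟩ := hθ (-p) (q 0) (q 1) (by
      simp only [Fin.sum_univ_two, Matrix.cons_val_zero, Matrix.cons_val_one] at h
      push_cast
      linarith)
    ext i
    fin_cases i <;> simp_all
  obtain ⟨n, hn⟩ := kronecker_approximation hθ' ![c₁, c₂] hε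
  obtain ⟨m₁, hm₁⟩ := hn 0
  obtain ⟨m₂, hm₂⟩ := hn 1
  exact ⟨n, m₁, m₂, hm₁, hm₂⟩

end

section

open Set

/-- The `ℤ²`-periodic extension of `Φ` to `ℝ²`. -/
noncomputable def rectProj (γ : ℝ) (z : ℝ × ℝ) : ℝ × ℝ :=
  (Int.fract z.1, Int.fract (z.2 - γ * Int.fract z.1))

theorem Int.fract_fract_add {R : Type*} [Ring R] [LinearOrder R] [FloorRing R] [IsOrderedRing R]
    (a b : R) : Int.fract (Int.fract a + b) = Int.fract (a + b) := by
  rw [← Int.self_sub_floor a, sub_add_eq_add_sub, Int.fract_sub_intCast]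

theorem rectProj_add_intCast (γ : ℝ) (z : ℝ × ℝ) (m₁ m₂ : ℤ) :
    rectProj γ (z + ((m₁ : ℝ), (m₂ : ℝ))) = rectProj γ z := by
  simp only [rectProj, Prod.fst_add, Prod.snd_add, Int.fract_add_intCast, add_sub_right_comm]

theorem rectProj_mk_add_mul {x : ℝ} (hx : x ∈ Ico 0 1) (γ y : ℝ) :
    rectProj γ (x, y + γ * x) = (x, Int.fract y) := by
  simp [rectProj, Int.fract_eq_self.2 hx]

theorem rectS_rectProj {α : ℝ} (hα₀ : 0 ≤ α) (hα₁ : α ≤ 1) (γ : ℝ) (z : ℝ × ℝ) :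
    rectS α γ (rectProj γ z) = rectProj γ (z + (α, α * γ)) := by
  obtain ⟨s, t⟩ := z
  have h₀ := Int.fract_nonneg s
  have h₁ := Int.fract_lt_one s
  simp only [rectS, rectProj, Prod.mk_add_mk, Int.fract_fract_add]
  split_ifs with h
  · have hs : Int.fract (s + α) = Int.fract s + α :=
      Int.fract_eq_iff.2 ⟨by linarith, by linarith, ⌊s⌋, by rw [← Int.self_sub_floor]; ring⟩
    rw [hs]
    congr 2
    ring
  · have hs : Int.fract (s + α) = Int.fract s + α - 1 := Int.fract_eq_iff.2
      ⟨by linarith, by linarith, ⌊s⌋ + 1, by push_cast; rw [← Int.self_sub_floor]; ring⟩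
    rw [hs]
    congr 2
    ring

theorem rectS_iterate_rectProj {α : ℝ} (hα₀ : 0 ≤ α) (hα₁ : α ≤ 1) (γ : ℝ) (n : ℕ)
    (z : ℝ × ℝ) : (rectS α γ)^[n] (rectProj γ z) = rectProj γ (z + n • (α, α * γ)) := by
  have h : Function.Semiconj (rectProj γ) (· + (α, α * γ)) (rectS α γ) :=
    fun z => (rectS_rectProj hα₀ hα₁ γ z).symm
  rw [← (h.iterate_right n).eq, add_right_iterate]

theorem continuousAt_rectProj {a b : ℝ} (ha : a ∈ Ioo 0 1) (hb : b ∈ Ioo 0 1) (γ : ℝ) :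
    ContinuousAt (rectProj γ) (a, b + γ * a) := by
  have hU : ∀ᶠ z in 𝓝 (a, b + γ * a), z.1 ∈ Ioo 0 1 ∧ z.2 - γ * z.1 ∈ Ioo 0 1 := by
    refine (continuous_fst.continuousAt.eventually_mem (isOpen_Ioo.mem_nhds ha)).and ?_
    refine ContinuousAt.eventually_mem (by fun_prop) (isOpen_Ioo.mem_nhds ?_)
    simpa using hb
  have hloc : (fun z : ℝ × ℝ => (z.1, z.2 - γ * z.1)) =ᶠ[𝓝 (a, b + γ * a)] rectProj γ := by
    filter_upwards [hU] with z ⟨h₁, h₂⟩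
    simp [rectProj, Int.fract_eq_self.2 ⟨h₁.1.le, h₁.2⟩, Int.fract_eq_self.2 ⟨h₂.1.le, h₂.2⟩]
  exact ContinuousAt.congr (by fun_prop) hloc

theorem Ioo_prod_Ioo_subset_closure_range_rectProj {α γ : ℝ}
    (hθ : ∀ p q r : ℚ, (p : ℝ) + q * α + r * (α * γ) = 0 → p = 0 ∧ q = 0 ∧ r = 0)
    (z : ℝ × ℝ) :
    Ioo 0 1 ×ˢ Ioo 0 1 ⊆ closure (range fun n : ℕ => rectProj γ (z + n • (α, α * γ))) := by
  rintro ⟨a, b⟩ ⟨ha, hb⟩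
  have hab : rectProj γ (a, b + γ * a) = (a, b) := by
    rw [rectProj_mk_add_mul (Ioo_subset_Ico_self ha), Int.fract_eq_self.2 ⟨hb.1.le, hb.2⟩]
  rw [← hab]
  refine Metric.mem_closure_iff.2 fun ε hε => ?_
  obtain ⟨δ, hδ, hcont⟩ := Metric.continuousAt_iff.1 (continuousAt_rectProj ha hb γ) ε hε
  obtain ⟨n, m₁, m₂, hm₁, hm₂⟩ :=
    kronecker_approximation_two hθ (a - z.1) (b + γ * a - z.2) hδ
  refine ⟨rectProj γ (z + n • (α, α * γ)), ⟨n, rfl⟩, ?_⟩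
  rw [dist_comm, ← rectProj_add_intCast γ _ (-m₁) (-m₂)]
  refine hcont ?_
  rw [Prod.dist_eq, max_lt_iff, Real.dist_eq, Real.dist_eq]
  constructor
  · refine lt_of_eq_of_lt (congr_arg abs ?_) hm₁
    rw [Prod.fst_add, Prod.fst_add, Prod.smul_fst, nsmul_eq_mul]
    push_cast
    ring
  · refine lt_of_eq_of_lt (congr_arg abs ?_) hm₂
    rw [Prod.snd_add, Prod.snd_add, Prod.smul_snd, nsmul_eq_mul]
    push_cast
    ring

end

theorem stmt_11_general (α γ : ℝ) (hα : α ∈ Set.Ioo (0:ℝ) 1)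
    (hindep : ∀ p q r : ℚ, (p : ℝ) + q * α + r * (α * γ) = 0 → p = 0 ∧ q = 0 ∧ r = 0)
    (x₀ y₀ : ℝ) (hx₀ : x₀ ∈ Set.Ico (0:ℝ) 1) (hy₀ : y₀ ∈ Set.Ico (0:ℝ) 1) :
    Set.Ico (0:ℝ) 1 ×ˢ Set.Ico (0:ℝ) 1 ⊆
      closure {p : ℝ × ℝ | ∃ n : ℕ, p = (rectS α γ)^[n] (x₀, y₀)} := by
  have horbit : (Set.range fun n : ℕ => rectProj γ ((x₀, y₀ + γ * x₀) + n • (α, α * γ))) ⊆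
      {p : ℝ × ℝ | ∃ n : ℕ, p = (rectS α γ)^[n] (x₀, y₀)} := by
    rintro _ ⟨n, rfl⟩
    refine ⟨n, ?_⟩
    dsimp only
    rw [← rectS_iterate_rectProj hα.1.le hα.2.le, rectProj_mk_add_mul hx₀,
      Int.fract_eq_self.2 hy₀]
  -- `rectProj γ` is discontinuous along the grid lines, so approximate the open square first
  calc Set.Ico (0:ℝ) 1 ×ˢ Set.Ico (0:ℝ) 1 ⊆ closure (Set.Ioo (0:ℝ) 1 ×ˢ Set.Ioo (0:ℝ) 1) := by
        rw [closure_prod_eq, closure_Ioo zero_ne_one]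
        exact Set.prod_mono Set.Ico_subset_Icc_self Set.Ico_subset_Icc_self
    _ ⊆ closure {p : ℝ × ℝ | ∃ n : ℕ, p = (rectS α γ)^[n] (x₀, y₀)} :=
        closure_minimal ((Ioo_prod_Ioo_subset_closure_range_rectProj hindep _).trans
          (closure_mono horbit)) isClosed_closure

theorem stmt_11 (α γ : ℝ) (hα : α ∈ Set.Ioo (0:ℝ) 1) (hγ : γ ∈ Set.Ioo (0:ℝ) 1)
    (hindep : ∀ p q r : ℚ, (p : ℝ) + q * α + r * (α * γ) = 0 → p = 0 ∧ q = 0 ∧ r = 0)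
    (x₀ y₀ : ℝ) (hx₀ : x₀ ∈ Set.Ico (0:ℝ) 1) (hy₀ : y₀ ∈ Set.Ico (0:ℝ) 1) :
    Set.Ico (0:ℝ) 1 ×ˢ Set.Ico (0:ℝ) 1 ⊆
      closure {p : ℝ × ℝ | ∃ n : ℕ, p = (rectS α γ)^[n] (x₀, y₀)} :=
  stmt_11_general α γ hα hindep x₀ y₀ hx₀ hy₀
end

section
/- Let m ≥ 3, β = (m+√(m²−4))/2, U as above, and let n ∈ ℕ have U-expansion (n)_U = a_N a_{N−1} ⋯ a_1 a_0 (i.e., n = ∑_{k=0}^{N} a_k U_k with a_N ≠ 0 and ∑_{k=0}^{i} a_k U_k < U_{i+1} for every i ≤ N). Then ⌊n/β⌋ = ∑_{k=1}^{N} a_k U_{k−1}, and moreover this representation a_N ⋯ a_1 is itself a greedy representation (∑_{k=1}^{i} a_k U_{k−1} < U_i for each i ≤ N), while the fractional part satisfies {n/β} = ∑_{k=1}^{N+1} a_{k−1} β^{−k}. -/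
/-- The sequence `U` from the paper, with index shifted by one:
`U m 0 = U_{-1} = 0`, `U m 1 = U_0 = 1`, `U m (k+2) = m * U m (k+1) - U m k`. -/
def U (m : ℕ) : ℕ → ℤ
  | 0 => 0
  | 1 => 1
  | (k + 2) => m * U m (k + 1) - U m k

/-!
Write `q = β⁻¹`, so that `m q = 1 + q²`. The recurrence of `U` then gives
`q U_k = U_{k-1} + q^{k+1}`, hence `n/β = ∑ a_k U_{k-1} + T` with `T = ∑ a_k q^{k+1}`, and
everything reduces to `0 ≤ T < 1`. Writing `T_j`, `V_j` for the contributions of the digits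
`a_0, …, a_{j-1}`, greediness gives, by induction on `j`, the two bounds
`T_j + q^j ≤ 1 + q^{j+1}` and, when the prefix leaves room (`V_j + U_{j-1} < U_j`),
`T_j + q^j ≤ 1`: a digit `m - 1` can only follow a prefix with room. The greediness of
`a_N ⋯ a_1` follows from `q V = ∑ a_k U_{k-1} + T` with `T ≥ 0`.
-/

open Finset

lemma sum_Icc_one_eq_sum_range {M : Type*} [AddCommMonoid M] (f : ℕ → M) (n : ℕ) :
    ∑ k ∈ Icc 1 n, f k = ∑ k ∈ range n, f (k + 1) := by
  rw [range_eq_Ico, sum_Ico_add' f 0 n 1, zero_add, Ico_add_one_right_eq_Icc]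

lemma U_add_two (m k : ℕ) : U m (k + 2) = m * U m (k + 1) - U m k := rfl

lemma U_nonneg_and_lt_succ {m : ℕ} (hm : 2 ≤ m) (k : ℕ) : 0 ≤ U m k ∧ U m k < U m (k + 1) := by
  induction k with
  | zero => simp [U]
  | succ k ih =>
    have hm' : (2 : ℤ) ≤ m := by exact_mod_cast hm
    refine ⟨by linarith [ih.1, ih.2], ?_⟩
    rw [U_add_two]
    nlinarith [ih.1, ih.2]

lemma U_nonneg {m : ℕ} (hm : 2 ≤ m) (k : ℕ) : 0 ≤ U m k := (U_nonneg_and_lt_succ hm k).1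

lemma U_lt_succ {m : ℕ} (hm : 2 ≤ m) (k : ℕ) : U m k < U m (k + 1) := (U_nonneg_and_lt_succ hm k).2

lemma U_succ_pos {m : ℕ} (hm : 2 ≤ m) (k : ℕ) : 0 < U m (k + 1) :=
  (U_nonneg hm k).trans_lt (U_lt_succ hm k)

def uValue (m : ℕ) (a : ℕ → ℕ) (j : ℕ) : ℤ := ∑ k ∈ range j, (a k : ℤ) * U m (k + 1)

noncomputable def radixValue (q : ℝ) (a : ℕ → ℕ) (j : ℕ) : ℝ :=
  ∑ k ∈ range j, (a k : ℝ) * q ^ (k + 1)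

lemma uValue_succ (m : ℕ) (a : ℕ → ℕ) (j : ℕ) :
    uValue m a (j + 1) = uValue m a j + a j * U m (j + 1) :=
  sum_range_succ _ _

lemma uValue_nonneg {m : ℕ} (hm : 2 ≤ m) (a : ℕ → ℕ) (j : ℕ) : 0 ≤ uValue m a j :=
  sum_nonneg fun _ _ => mul_nonneg (Int.natCast_nonneg _) (U_nonneg hm _)

lemma radixValue_succ (q : ℝ) (a : ℕ → ℕ) (j : ℕ) :
    radixValue q a (j + 1) = radixValue q a j + a j * q ^ (j + 1) :=
  sum_range_succ _ _

lemma radixValue_nonneg {q : ℝ} (hq : 0 ≤ q) (a : ℕ → ℕ) (j : ℕ) : 0 ≤ radixValue q a j :=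
  sum_nonneg fun _ _ => by positivity

section

variable {m : ℕ} {q : ℝ} (hmq : (m : ℝ) * q = 1 + q ^ 2)
include hmq

lemma two_le_of_mul_eq_one_add_sq : 2 ≤ m := by
  have : (2 : ℝ) ≤ m := by nlinarith [sq_nonneg (q - 1)]
  exact_mod_cast this

lemma mul_U_succ (k : ℕ) : q * U m (k + 1) = U m k + q ^ (k + 1) := by
  induction k with
  | zero => simp [U]
  | succ k ih =>
    rw [U_add_two]
    push_cast
    linear_combination (U m (k + 1) : ℝ) * hmq + q * ih

lemma mul_uValue (a : ℕ → ℕ) (j : ℕ) :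
    q * uValue m a j = ∑ k ∈ range j, (a k : ℤ) * U m k + radixValue q a j := by
  simp only [uValue, radixValue]
  push_cast
  rw [mul_sum, ← sum_add_distrib]
  refine sum_congr rfl fun k _ => ?_
  linear_combination (a k : ℝ) * mul_U_succ hmq k

lemma radixValue_step {a : ℕ → ℕ} {j : ℕ} (hq0 : 0 ≤ q) (hq1 : q ≤ 1)
    (hA : radixValue q a j + q ^ j ≤ 1 + q ^ (j + 1))
    (hB : uValue m a j + U m j < U m (j + 1) → radixValue q a j + q ^ j ≤ 1)
    (hg : uValue m a (j + 1) < U m (j + 2)) :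
    radixValue q a (j + 1) + q ^ (j + 1) ≤ 1 + q ^ (j + 2) ∧
      (uValue m a (j + 1) + U m (j + 1) < U m (j + 2) →
        radixValue q a (j + 1) + q ^ (j + 1) ≤ 1) := by
  have hm := two_le_of_mul_eq_one_add_sq hmq
  have hT : radixValue q a (j + 1) + q ^ (j + 1) =
      radixValue q a j + q ^ j + q ^ (j + 2) - (m - 1 - a j) * q ^ (j + 1) := by
    rw [radixValue_succ]
    linear_combination q ^ j * hmq
  rw [uValue_succ, U_add_two] at *
  have hV0 := uValue_nonneg hm a j
  have hU0 := U_nonneg hm j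
  have hU1 := U_succ_pos hm j
  have hpow : q ^ (j + 2) ≤ q ^ (j + 1) := pow_le_pow_of_le_one hq0 hq1 (by omega)
  have hpow0 : 0 ≤ q ^ (j + 1) := by positivity
  have hdigit : a j < m := by
    have : (a j : ℤ) * U m (j + 1) < m * U m (j + 1) := by linarith
    exact_mod_cast lt_of_mul_lt_mul_right this hU1.le
  -- a digit `m - 1` is only possible after a prefix that leaves room, which is where `hB` applies
  obtain h | h | h : a j + 1 = m ∨ a j + 2 = m ∨ a j + 3 ≤ m := by omega
  · have hR : (m : ℝ) - 1 - a j = 0 := by rw [← h]; push_cast; ring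
    have hZ : (a j : ℤ) = m - 1 := by omega
    rw [hZ] at hg ⊢
    refine ⟨?_, fun hlt => by linarith⟩
    rw [hT, hR]
    linarith [hB (by linarith)]
  · have hR : (m : ℝ) - 1 - a j = 1 := by rw [← h]; push_cast; ring
    have hZ : (a j : ℤ) = m - 2 := by omega
    rw [hT, hR]; rw [hZ] at hg ⊢
    exact ⟨by linarith, fun hlt => by linarith [hB (by linarith)]⟩
  · have hR : (2 : ℝ) ≤ m - 1 - a j := by
      have : ((a j + 3 : ℕ) : ℝ) ≤ m := by exact_mod_cast h
      push_cast at this; linarith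
    have := mul_le_mul_of_nonneg_right hR hpow0
    rw [hT]
    exact ⟨by linarith, fun _ => by linarith⟩

lemma radixValue_bounds {a : ℕ → ℕ} (hq0 : 0 ≤ q) (hq1 : q ≤ 1) (j : ℕ)
    (hg : ∀ i < j, uValue m a (i + 1) < U m (i + 2)) :
    radixValue q a j + q ^ j ≤ 1 + q ^ (j + 1) ∧
      (uValue m a j + U m j < U m (j + 1) → radixValue q a j + q ^ j ≤ 1) := by
  induction j with
  | zero => simp [radixValue, uValue, U, hq0]
  | succ j ih =>
    obtain ⟨hA, hB⟩ := ih fun i hi => hg i (by omega)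
    exact radixValue_step hmq hq0 hq1 hA hB (hg j (by omega))

lemma radixValue_lt_one {a : ℕ → ℕ} {j : ℕ} (hq0 : 0 < q) (hq1 : q < 1)
    (hg : ∀ i < j, uValue m a (i + 1) < U m (i + 2)) : radixValue q a j < 1 := by
  have hA := (radixValue_bounds hmq hq0.le hq1.le j hg).1
  have : q ^ (j + 1) < q ^ j := pow_lt_pow_right_of_lt_one₀ hq0 hq1 (by omega)
  linarith

lemma floor_uValue_mul {a : ℕ → ℕ} {j : ℕ} (hq0 : 0 < q) (hq1 : q < 1)
    (hg : ∀ i < j, uValue m a (i + 1) < U m (i + 2)) :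
    ⌊(uValue m a j : ℝ) * q⌋ = ∑ k ∈ range j, (a k : ℤ) * U m k := by
  rw [mul_comm, mul_uValue hmq, Int.floor_eq_iff]
  push_cast
  constructor <;> linarith [radixValue_nonneg hq0.le a j, radixValue_lt_one hmq hq0 hq1 hg]

lemma fract_uValue_mul {a : ℕ → ℕ} {j : ℕ} (hq0 : 0 < q) (hq1 : q < 1)
    (hg : ∀ i < j, uValue m a (i + 1) < U m (i + 2)) :
    Int.fract ((uValue m a j : ℝ) * q) = radixValue q a j := by
  rw [mul_comm, mul_uValue hmq, Int.fract_intCast_add, Int.fract_eq_self]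
  exact ⟨radixValue_nonneg hq0.le a j, radixValue_lt_one hmq hq0 hq1 hg⟩

lemma sum_mul_U_lt_U_of_uValue_lt {a : ℕ → ℕ} {j : ℕ} (hq0 : 0 < q) (hq1 : q < 1)
    (hg : uValue m a (j + 1) < U m (j + 2)) :
    ∑ k ∈ range (j + 1), (a k : ℤ) * U m k < U m (j + 1) := by
  have hg' : (uValue m a (j + 1) : ℝ) ≤ U m (j + 2) - 1 := by
    exact_mod_cast Int.le_sub_one_of_lt hg
  have hS := mul_uValue hmq a (j + 1)
  have hU := mul_U_succ hmq (j + 1)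
  have hT := radixValue_nonneg hq0.le a (j + 1)
  have hpow : q ^ (j + 2) < q := pow_lt_self_of_lt_one₀ hq0 hq1 (by omega)
  have hqV := mul_le_mul_of_nonneg_left hg' hq0.le
  have : ((∑ k ∈ range (j + 1), (a k : ℤ) * U m k : ℤ) : ℝ) < U m (j + 1) := by
    push_cast at hS ⊢
    linarith
  exact_mod_cast this

end

lemma sum_range_succ_mul_U (m : ℕ) (c : ℕ → ℤ) (i : ℕ) :
    ∑ k ∈ range (i + 1), c k * U m k = ∑ k ∈ Icc 1 i, c k * U m k := by
  rw [sum_range_succ', sum_Icc_one_eq_sum_range]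
  simp [U]

theorem stmt_16_general (m : ℕ) (hm : 3 ≤ m) (β : ℝ)
    (hβ : β = (m + Real.sqrt ((m : ℝ) ^ 2 - 4)) / 2)
    (n : ℕ) (N : ℕ) (a : ℕ → ℕ)
    (hsum : (n : ℤ) = ∑ k ∈ Finset.range (N + 1), (a k : ℤ) * U m (k + 1))
    (hgreedy : ∀ i ≤ N,
      ∑ k ∈ Finset.range (i + 1), (a k : ℤ) * U m (k + 1) < U m (i + 2)) :
    ⌊(n : ℝ) / β⌋ = ∑ k ∈ Finset.Icc 1 N, (a k : ℤ) * U m k ∧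
    (∀ i ≤ N, ∑ k ∈ Finset.Icc 1 i, (a k : ℤ) * U m k < U m (i + 1)) ∧
    Int.fract ((n : ℝ) / β) = ∑ k ∈ Finset.Icc 1 (N + 1), (a (k - 1) : ℝ) * β⁻¹ ^ k := by
  have hmR : (3 : ℝ) ≤ m := by exact_mod_cast hm
  have hsqrt := Real.sq_sqrt (show (0 : ℝ) ≤ (m : ℝ) ^ 2 - 4 by nlinarith)
  have hβ1 : 1 < β := by rw [hβ]; linarith [Real.sqrt_nonneg ((m : ℝ) ^ 2 - 4)]
  have hmq : (m : ℝ) * β⁻¹ = 1 + β⁻¹ ^ 2 := by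
    have : β ^ 2 = m * β - 1 := by rw [hβ]; linear_combination hsqrt / 4
    field_simp
    linear_combination -this
  have hq0 : 0 < β⁻¹ := by positivity
  have hq1 : β⁻¹ < 1 := inv_lt_one_of_one_lt₀ hβ1
  have hg : ∀ i < N + 1, uValue m a (i + 1) < U m (i + 2) := fun i hi => hgreedy i (by omega)
  have hn : (n : ℝ) / β = (uValue m a (N + 1) : ℝ) * β⁻¹ := by
    rw [div_eq_mul_inv, uValue, ← hsum, Int.cast_natCast]
  refine ⟨?_, fun i hi => ?_, ?_⟩
  · rw [hn, floor_uValue_mul hmq hq0 hq1 hg, sum_range_succ_mul_U]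
  · rw [← sum_range_succ_mul_U]
    exact sum_mul_U_lt_U_of_uValue_lt hmq hq0 hq1 (hgreedy i hi)
  · rw [hn, fract_uValue_mul hmq hq0 hq1 hg, radixValue, sum_Icc_one_eq_sum_range]
    simp

theorem stmt_16 (m : ℕ) (hm : 3 ≤ m) (β : ℝ)
    (hβ : β = (m + Real.sqrt ((m : ℝ) ^ 2 - 4)) / 2)
    (n : ℕ) (N : ℕ) (a : ℕ → ℕ)
    (hsum : (n : ℤ) = ∑ k ∈ Finset.range (N + 1), (a k : ℤ) * U m (k + 1))
    (hlead : a N ≠ 0)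
    (hgreedy : ∀ i ≤ N,
      ∑ k ∈ Finset.range (i + 1), (a k : ℤ) * U m (k + 1) < U m (i + 2)) :
    ⌊(n : ℝ) / β⌋ = ∑ k ∈ Finset.Icc 1 N, (a k : ℤ) * U m k ∧
    (∀ i ≤ N, ∑ k ∈ Finset.Icc 1 i, (a k : ℤ) * U m k < U m (i + 1)) ∧
    Int.fract ((n : ℝ) / β) = ∑ k ∈ Finset.Icc 1 (N + 1), (a (k - 1) : ℝ) * β⁻¹ ^ k :=
  stmt_16_general m hm β hβ n N a hsum hgreedy
end
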